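/- arXiv:2302.02607 — 9 statements merged into one kernel-verified Lean document; each statement's English description precedes it below -/
import Mathlib

section
/- Let h : ℝ^d → ℝ be differentiable and bounded below by h*. Let θ_0 ∈ ℝ^d and for each t = 0,…,T−1 let g_t : ℝ^d → ℝ be a differentiable, β-smooth function (gradient β-Lipschitz) satisfying g_t(θ_t) = h(θ_t), g_t(θ) ≥ h(θ) for all θ, and ∇g_t(θ_t) = ∇h(θ_t), where θ_{t+1} is obtained from θ_t by running m ≥ 1 steps of gradient descent on g_t with step-size 1/β starting from ω_0 = θ_t (i.e. ω_{k+1} = ω_k − (1/β)∇g_t(ω_k), θ_{t+1} = ω_m). Then for every t, h(θ_{t+1}) ≤ h(θ_t), and moreover min_{t ∈ {0,…,T−1}} ‖∇h(θ_t)‖² ≤ 2β(h(θ_0) − h*)/T. -/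
/-! Each surrogate step is a majorize–minimize step: the first gradient step on the β-smooth
surrogate `g_t` already decreases it by `‖∇g_t(θ_t)‖² / (2β) = ‖∇h(θ_t)‖² / (2β)`, later steps do
not increase it, and `h ≤ g_t` with equality at `θ_t` transfers this decrease to `h`. Summing the
decreases telescopes to `2β (h(θ_0) - h*)`, which bounds `T` times the smallest squared gradient. -/

open InnerProductSpace

section Smooth

variable {E : Type*} [NormedAddCommGroup E] [InnerProductSpace ℝ E] [CompleteSpace E]

theorem hasDerivAt_comp_add_smul_of_differentiable {g : E → ℝ} (hg : Differentiable ℝ g)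
    (u w : E) (s : ℝ) :
    HasDerivAt (fun s : ℝ => g (u + s • w)) ⟪gradient g (u + s • w), w⟫_ℝ s := by
  have hline : HasDerivAt (fun s : ℝ => u + s • w) w s := by
    simpa using ((hasDerivAt_id s).smul_const w).const_add u
  have := (hg (u + s • w)).hasGradientAt.hasFDerivAt.comp_hasDerivAt s hline
  rwa [toDual_apply_apply] at this

variable {g : E → ℝ} {β : ℝ}

theorem inner_gradient_add_smul_sub_le
    (hL : ∀ u v, ‖gradient g u - gradient g v‖ ≤ β * ‖u - v‖) (u w : E) {s : ℝ} (hs : 0 ≤ s) :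
    ⟪gradient g (u + s • w) - gradient g u, w⟫_ℝ ≤ β * s * ‖w‖ ^ 2 := by
  have hlip : ‖gradient g (u + s • w) - gradient g u‖ ≤ β * (s * ‖w‖) := by
    simpa [norm_smul, abs_of_nonneg hs] using hL (u + s • w) u
  calc ⟪gradient g (u + s • w) - gradient g u, w⟫_ℝ
      ≤ ‖gradient g (u + s • w) - gradient g u‖ * ‖w‖ := real_inner_le_norm _ _
    _ ≤ β * (s * ‖w‖) * ‖w‖ := by gcongr
    _ = β * s * ‖w‖ ^ 2 := by ring

theorem le_add_inner_gradient_add_sq_of_lipschitz_gradient (hg : Differentiable ℝ g)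
    (hL : ∀ u v, ‖gradient g u - gradient g v‖ ≤ β * ‖u - v‖) (u v : E) :
    g v ≤ g u + ⟪gradient g u, v - u⟫_ℝ + β / 2 * ‖v - u‖ ^ 2 := by
  set w := v - u
  -- `ψ` has derivative `⟪∇g(u + s w) - ∇g u, w⟫ - β s ‖w‖² ≤ 0` for `s ≥ 0`.
  let ψ : ℝ → ℝ := fun s => g (u + s • w) - s * ⟪gradient g u, w⟫_ℝ - β / 2 * s ^ 2 * ‖w‖ ^ 2
  have hψ : ∀ s, HasDerivAt ψ
      (⟪gradient g (u + s • w), w⟫_ℝ - ⟪gradient g u, w⟫_ℝ - β * s * ‖w‖ ^ 2) s := by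
    intro s
    have hquad : HasDerivAt (fun s : ℝ => β / 2 * s ^ 2 * ‖w‖ ^ 2) (β * s * ‖w‖ ^ 2) s :=
      (((hasDerivAt_pow 2 s).const_mul (β / 2)).mul_const (‖w‖ ^ 2)).congr_deriv
        (by push_cast; ring)
    exact ((hasDerivAt_comp_add_smul_of_differentiable hg u w s).sub
      ((hasDerivAt_id s).mul_const _)).sub hquad |>.congr_deriv (by simp)
  have hanti : AntitoneOn ψ (Set.Ici 0) := by
    refine antitoneOn_of_deriv_nonpos (convex_Ici 0)
      (fun s _ => (hψ s).continuousAt.continuousWithinAt)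
      (fun s _ => (hψ s).differentiableAt.differentiableWithinAt) fun s hs => ?_
    rw [interior_Ici] at hs
    rw [(hψ s).deriv, ← inner_sub_left, sub_nonpos]
    exact inner_gradient_add_smul_sub_le hL u w hs.le
  have h10 : ψ 1 ≤ ψ 0 := hanti Set.self_mem_Ici (Set.mem_Ici.mpr zero_le_one) zero_le_one
  simp only [ψ, one_smul, zero_smul, add_zero, w, add_sub_cancel] at h10
  linarith

theorem le_sub_sq_norm_gradient_of_gradient_step (hβ : 0 < β) (hg : Differentiable ℝ g)
    (hL : ∀ u v, ‖gradient g u - gradient g v‖ ≤ β * ‖u - v‖) (u : E) :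
    g (u - (1 / β) • gradient g u) ≤ g u - 1 / (2 * β) * ‖gradient g u‖ ^ 2 := by
  have hdesc := le_add_inner_gradient_add_sq_of_lipschitz_gradient hg hL u
    (u - (1 / β) • gradient g u)
  rw [sub_sub_cancel_left, inner_neg_right, real_inner_smul_right, real_inner_self_eq_norm_sq,
    norm_neg, norm_smul, Real.norm_of_nonneg (by positivity), mul_pow] at hdesc
  calc _ ≤ _ := hdesc
    _ = g u - 1 / (2 * β) * ‖gradient g u‖ ^ 2 := by field_simp; ring

theorem gradientDescent_le_sub_sq_norm_gradient (hβ : 0 < β) (hg : Differentiable ℝ g)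
    (hL : ∀ u v, ‖gradient g u - gradient g v‖ ≤ β * ‖u - v‖) {ω : ℕ → E}
    (hω : ∀ k, ω (k + 1) = ω k - (1 / β) • gradient g (ω k)) {m : ℕ} (hm : 1 ≤ m) :
    g (ω m) ≤ g (ω 0) - 1 / (2 * β) * ‖gradient g (ω 0)‖ ^ 2 := by
  have hstep : ∀ k, g (ω (k + 1)) ≤ g (ω k) - 1 / (2 * β) * ‖gradient g (ω k)‖ ^ 2 := fun k => by
    rw [hω k]
    exact le_sub_sq_norm_gradient_of_gradient_step hβ hg hL (ω k)
  induction m, hm using Nat.le_induction with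
  | base => exact hstep 0
  | succ n _ ih =>
    have : 0 ≤ 1 / (2 * β) * ‖gradient g (ω n)‖ ^ 2 := by positivity
    linarith [hstep n]

end Smooth

theorem Finset.inf'_range_le_div_of_le_sub_succ {T : ℕ} (hT : (Finset.range T).Nonempty)
    {x f : ℕ → ℝ} {lower : ℝ} (hstep : ∀ t < T, x t ≤ f t - f (t + 1)) (hlower : lower ≤ f T) :
    (Finset.range T).inf' hT x ≤ (f 0 - lower) / T := by
  have hTpos : (0 : ℝ) < T := by simpa [Nat.pos_iff_ne_zero] using hT
  have hsum : ∑ t ∈ Finset.range T, x t ≤ f 0 - f T := by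
    rw [← Finset.sum_range_sub' f]
    exact Finset.sum_le_sum fun t ht => hstep t (Finset.mem_range.mp ht)
  have hcard : (T : ℝ) * (Finset.range T).inf' hT x ≤ ∑ t ∈ Finset.range T, x t := by
    simpa using Finset.card_nsmul_le_sum _ x ((Finset.range T).inf' hT x)
      fun t ht => Finset.inf'_le x ht
  rw [le_div_iff₀ hTpos]
  linarith

theorem stmt0_general {d : ℕ} (h : EuclideanSpace ℝ (Fin d) → ℝ)
    (hstar : ℝ) (hbdd : ∀ θ', hstar ≤ h θ')
    (T : ℕ) (hT : 0 < T) (m : ℕ) (hm : 1 ≤ m) (β : ℝ) (hβ : 0 < β)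
    (θ : ℕ → EuclideanSpace ℝ (Fin d)) (g : ℕ → EuclideanSpace ℝ (Fin d) → ℝ)
    (hgdiff : ∀ t < T, Differentiable ℝ (g t))
    (hsmooth : ∀ t < T, ∀ u v, ‖gradient (g t) u - gradient (g t) v‖ ≤ β * ‖u - v‖)
    (htight : ∀ t < T, g t (θ t) = h (θ t))
    (hupper : ∀ t < T, ∀ θ', h θ' ≤ g t θ')
    (hgrad : ∀ t < T, gradient (g t) (θ t) = gradient h (θ t))
    (hupdate : ∀ t < T, ∃ ω : ℕ → EuclideanSpace ℝ (Fin d),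
      ω 0 = θ t ∧ (∀ k, ω (k + 1) = ω k - (1 / β) • gradient (g t) (ω k)) ∧
        θ (t + 1) = ω m) :
    (∀ t < T, h (θ (t + 1)) ≤ h (θ t)) ∧
      (Finset.range T).inf' (Finset.nonempty_range_iff.mpr hT.ne')
        (fun t => ‖gradient h (θ t)‖ ^ 2) ≤ 2 * β * (h (θ 0) - hstar) / T := by
  have hdecrease : ∀ t < T, h (θ (t + 1)) ≤ h (θ t) - 1 / (2 * β) * ‖gradient h (θ t)‖ ^ 2 := by
    intro t ht
    obtain ⟨ω, hω0, hω, hθω⟩ := hupdate t ht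
    have hdesc := gradientDescent_le_sub_sq_norm_gradient hβ (hgdiff t ht) (hsmooth t ht) hω hm
    rw [hω0, hgrad t ht, htight t ht, ← hθω] at hdesc
    exact (hupper t ht _).trans hdesc
  refine ⟨fun t ht => ?_, ?_⟩
  · have : 0 ≤ 1 / (2 * β) * ‖gradient h (θ t)‖ ^ 2 := by positivity
    linarith [hdecrease t ht]
  · rw [show 2 * β * (h (θ 0) - hstar) = 2 * β * h (θ 0) - 2 * β * hstar by ring]
    refine Finset.inf'_range_le_div_of_le_sub_succ (f := fun t => 2 * β * h (θ t)) _
      (fun t ht => ?_)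
      (mul_le_mul_of_nonneg_left (hbdd (θ T)) (by positivity : (0 : ℝ) ≤ 2 * β))
    have := hdecrease t ht
    field_simp at this
    linarith

theorem stmt0 {d : ℕ} (h : EuclideanSpace ℝ (Fin d) → ℝ) (hdiff : Differentiable ℝ h)
    (hstar : ℝ) (hbdd : ∀ θ', hstar ≤ h θ')
    (T : ℕ) (hT : 0 < T) (m : ℕ) (hm : 1 ≤ m) (β : ℝ) (hβ : 0 < β)
    (θ : ℕ → EuclideanSpace ℝ (Fin d)) (g : ℕ → EuclideanSpace ℝ (Fin d) → ℝ)
    (hgdiff : ∀ t < T, Differentiable ℝ (g t))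
    (hsmooth : ∀ t < T, ∀ u v, ‖gradient (g t) u - gradient (g t) v‖ ≤ β * ‖u - v‖)
    (htight : ∀ t < T, g t (θ t) = h (θ t))
    (hupper : ∀ t < T, ∀ θ', h θ' ≤ g t θ')
    (hgrad : ∀ t < T, gradient (g t) (θ t) = gradient h (θ t))
    (hupdate : ∀ t < T, ∃ ω : ℕ → EuclideanSpace ℝ (Fin d),
      ω 0 = θ t ∧ (∀ k, ω (k + 1) = ω k - (1 / β) • gradient (g t) (ω k)) ∧
        θ (t + 1) = ω m) :
    (∀ t < T, h (θ (t + 1)) ≤ h (θ t)) ∧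
      (Finset.range T).inf' (Finset.nonempty_range_iff.mpr hT.ne')
        (fun t => ‖gradient h (θ t)‖ ^ 2) ≤ 2 * β * (h (θ 0) - hstar) / T :=
  stmt0_general h hstar hbdd T hT m hm β hβ θ g hgdiff hsmooth htight hupper hgrad hupdate
end

section
/- Let Z ⊆ ℝ^p be a nonempty closed convex set, let ℓ_1, …, ℓ_n : ℝ^p → ℝ be differentiable, convex and L-smooth, and let ℓ = (1/n)∑_{i=1}^n ℓ_i be μ-strongly convex with constrained minimizer z* = argmin_{z ∈ Z} ℓ(z). Fix z_t ∈ Z and a step-size 0 < η' ≤ 1/(2L), and for each i let z̄_{t+1}(i) = Π_Z(z_t − η'∇ℓ_i(z_t)), where Π_Z denotes Euclidean projection onto Z. Then (1/n)∑_{i=1}^n ‖z̄_{t+1}(i) − z*‖² ≤ (1 − μη')‖z_t − z*‖² + 2η'²σ², where σ² := (1/n)∑_{i=1}^n ‖∇ℓ(z*) − ∇ℓ_i(z*)‖². -/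
open InnerProductSpace

section Helpers
variable {E : Type*} [NormedAddCommGroup E] [InnerProductSpace ℝ E] [CompleteSpace E]

lemma inner_gradient_eq_fderiv {f : E → ℝ} {x : E} (d : E) :
    (inner ℝ (gradient f x) d : ℝ) = fderiv ℝ f x d := by
  rw [gradient, toDual_symm_apply]

lemma nonneg_of_small_lb {a c : ℝ} (hc : 0 ≤ c)
    (key : ∀ t : ℝ, 0 < t → t ≤ 1 → -(c * t) ≤ a) : 0 ≤ a := by
  by_contra h
  push_neg at h
  rcases eq_or_lt_of_le hc with hceq | hclt
  · have := key 1 one_pos le_rfl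
    rw [← hceq] at this
    linarith
  · have hna : 0 < -a := by linarith
    have ht0 : 0 < min 1 (-a / (2 * c)) :=
      lt_min one_pos (div_pos hna (by linarith))
    have hk := key _ ht0 (min_le_left _ _)
    have htle : min 1 (-a / (2 * c)) ≤ -a / (2 * c) := min_le_right _ _
    have hct : c * min 1 (-a / (2 * c)) ≤ -a / 2 := by
      calc c * min 1 (-a / (2 * c)) ≤ c * (-a / (2 * c)) :=
            mul_le_mul_of_nonneg_left htle hc
        _ = -a / 2 := by field_simp
    linarith

lemma hasDerivAt_line (f : E → ℝ) (hf : Differentiable ℝ f) (u d : E) (t : ℝ) :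
    HasDerivAt (fun s : ℝ => f (u + s • d)) (inner ℝ (gradient f (u + t • d)) d : ℝ) t := by
  have hline : HasDerivAt (fun s : ℝ => u + s • d) d t := by
    simpa using ((hasDerivAt_id t).smul_const d).const_add u
  have h1 := ((hf (u + t • d)).hasGradientAt.hasFDerivAt).comp_hasDerivAt t hline
  simpa [toDual_apply_apply, Function.comp_def] using h1

lemma descent_lemma (f : E → ℝ) (hf : Differentiable ℝ f) (L : ℝ)
    (hlip : ∀ u v, ‖gradient f u - gradient f v‖ ≤ L * ‖u - v‖) (u v : E) :
    f v ≤ f u + (inner ℝ (gradient f u) (v - u) : ℝ) + L / 2 * ‖v - u‖ ^ 2 := by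
  set d := v - u with hd
  set φ : ℝ → ℝ := fun t =>
    f u + t * (inner ℝ (gradient f u) d : ℝ) + L / 2 * t ^ 2 * ‖d‖ ^ 2 - f (u + t • d) with hφ
  have hder : ∀ t : ℝ, HasDerivAt φ
      ((inner ℝ (gradient f u) d : ℝ) + L * t * ‖d‖ ^ 2
        - (inner ℝ (gradient f (u + t • d)) d : ℝ)) t := by
    intro t
    have h1 : HasDerivAt (fun t : ℝ => f u + t * (inner ℝ (gradient f u) d : ℝ)
        + L / 2 * t ^ 2 * ‖d‖ ^ 2)
        ((inner ℝ (gradient f u) d : ℝ) + L * t * ‖d‖ ^ 2) t := by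
      have ha : HasDerivAt (fun t : ℝ => t * (inner ℝ (gradient f u) d : ℝ))
          (inner ℝ (gradient f u) d : ℝ) t := by
        simpa using (hasDerivAt_id t).mul_const (inner ℝ (gradient f u) d : ℝ)
      have hb : HasDerivAt (fun t : ℝ => L / 2 * t ^ 2 * ‖d‖ ^ 2)
          (L * t * ‖d‖ ^ 2) t := by
        have : HasDerivAt (fun t : ℝ => t ^ 2) (2 * t) t := by
          simpa using hasDerivAt_pow 2 t
        have := (this.const_mul (L / 2)).mul_const (‖d‖ ^ 2)
        exact this.congr_deriv (by ring)
      exact (ha.const_add (f u)).add hb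
    exact h1.sub (hasDerivAt_line f hf u d t)
  have hmono : MonotoneOn φ (Set.Icc (0:ℝ) 1) := by
    apply monotoneOn_of_deriv_nonneg (convex_Icc 0 1)
    · exact (Continuous.continuousOn
        (continuous_iff_continuousAt.2 fun t => (hder t).continuousAt))
    · intro t ht
      exact (hder t).differentiableAt.differentiableWithinAt
    · intro t ht
      rw [(hder t).deriv]
      have ht0 : 0 < t := by
        rcases (Set.mem_Ioo.1 (by simpa [interior_Icc] using ht)) with ⟨h1, _⟩
        exact h1
      have hbound : (inner ℝ (gradient f u) d : ℝ) - (inner ℝ (gradient f (u + t • d)) d : ℝ)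
          ≥ -(L * t * ‖d‖ ^ 2) := by
        have h1 : (inner ℝ (gradient f u) d : ℝ) - (inner ℝ (gradient f (u + t • d)) d : ℝ)
            = (inner ℝ (gradient f u - gradient f (u + t • d)) d : ℝ) := by
          rw [inner_sub_left]
        rw [h1]
        have h2 := abs_real_inner_le_norm (gradient f u - gradient f (u + t • d)) d
        have h3 := hlip u (u + t • d)
        have h4 : ‖u - (u + t • d)‖ = t * ‖d‖ := by
          simp [norm_smul, abs_of_pos ht0]
        rw [h4] at h3
        have h5 : ‖gradient f u - gradient f (u + t • d)‖ * ‖d‖ ≤ L * t * ‖d‖ ^ 2 := by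
          have := mul_le_mul_of_nonneg_right h3 (norm_nonneg d)
          nlinarith
        have h6 := neg_abs_le (inner ℝ (gradient f u - gradient f (u + t • d)) d : ℝ)
        linarith
      linarith
  have h01 := hmono (Set.left_mem_Icc.2 zero_le_one) (Set.right_mem_Icc.2 zero_le_one) zero_le_one
  have h0 : φ 0 = 0 := by simp [hφ]
  have h1 : φ 1 = f u + (inner ℝ (gradient f u) d : ℝ) + L / 2 * ‖d‖ ^ 2 - f v := by
    simp [hφ, hd]
  rw [h0, h1] at h01
  linarith

lemma proj_char {Z : Set E} (hZ : Convex ℝ Z) {x z : E} (hz : z ∈ Z)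
    (hmin : ∀ w ∈ Z, ‖z - x‖ ≤ ‖w - x‖) :
    ∀ w ∈ Z, (inner ℝ (x - z) (w - z) : ℝ) ≤ 0 := by
  haveI : Nonempty Z := ⟨⟨z, hz⟩⟩
  have key : ‖x - z‖ = ⨅ w : Z, ‖x - w‖ := by
    apply le_antisymm
    · apply le_ciInf
      intro w
      rw [norm_sub_rev x z, norm_sub_rev x (w : E)]
      exact hmin w w.2
    · have hbdd : BddBelow (Set.range fun w : Z => ‖x - (w : E)‖) := by
        refine ⟨0, ?_⟩
        rintro b ⟨w, rfl⟩
        exact norm_nonneg _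
      exact ciInf_le hbdd ⟨z, hz⟩
  exact (norm_eq_iInf_iff_real_inner_le_zero hZ hz).1 key

lemma cocoercive (f : E → ℝ) (hf : Differentiable ℝ f) (L : ℝ) (hL : 0 < L)
    (hlip : ∀ u v, ‖gradient f u - gradient f v‖ ≤ L * ‖u - v‖)
    (hcv : ∀ u v, f u + (inner ℝ (gradient f u) (v - u) : ℝ) ≤ f v) (a b : E) :
    ‖gradient f a - gradient f b‖ ^ 2 ≤
      2 * L * (f a - f b - (inner ℝ (gradient f b) (a - b) : ℝ)) := by
  set D := gradient f a - gradient f b with hD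
  set w := a - L⁻¹ • D with hw
  have h1 := hcv b w
  have h2 := descent_lemma f hf L hlip a w
  have hwa : w - a = -(L⁻¹ • D) := by rw [hw]; abel
  have hwb : w - b = (a - b) - L⁻¹ • D := by rw [hw]; abel
  have e1 : (inner ℝ (gradient f a) (w - a) : ℝ) = -(L⁻¹ * (inner ℝ (gradient f a) D : ℝ)) := by
    rw [hwa, inner_neg_right, real_inner_smul_right]
  have e2 : (inner ℝ (gradient f b) (w - b) : ℝ)
      = (inner ℝ (gradient f b) (a - b) : ℝ) - L⁻¹ * (inner ℝ (gradient f b) D : ℝ) := by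
    rw [hwb, inner_sub_right, real_inner_smul_right]
  have e3 : ‖w - a‖ ^ 2 = L⁻¹ ^ 2 * ‖D‖ ^ 2 := by
    rw [hwa, norm_neg, norm_smul]
    simp [abs_of_pos (inv_pos.2 hL), mul_pow]
  have e4 : (inner ℝ (gradient f a) D : ℝ) - (inner ℝ (gradient f b) D : ℝ) = ‖D‖ ^ 2 := by
    rw [← inner_sub_left, ← hD, real_inner_self_eq_norm_sq]
  rw [e1, e3] at h2
  rw [e2] at h1
  have hL' : L⁻¹ > 0 := inv_pos.2 hL
  have hLL : L * L⁻¹ = 1 := mul_inv_cancel₀ hL.ne'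
  have h3 : L⁻¹ * ‖D‖ ^ 2 ≤ f a - f b - (inner ℝ (gradient f b) (a - b) : ℝ)
      + L / 2 * (L⁻¹ ^ 2 * ‖D‖ ^ 2) := by
    have e5 : L⁻¹ * ‖D‖ ^ 2 = L⁻¹ * ((inner ℝ (gradient f a) D : ℝ)
        - (inner ℝ (gradient f b) D : ℝ)) := by rw [e4]
    rw [e5]; ring_nf; ring_nf at h1 h2; linarith
  have h4 := mul_le_mul_of_nonneg_left h3 (by positivity : (0:ℝ) ≤ 2 * L)
  have key : 2 * L * (L⁻¹ * ‖D‖ ^ 2) = 2 * ‖D‖ ^ 2 := by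
    field_simp
  have key2 : 2 * L * (f a - f b - (inner ℝ (gradient f b) (a - b) : ℝ)
      + L / 2 * (L⁻¹ ^ 2 * ‖D‖ ^ 2))
      = 2 * L * (f a - f b - (inner ℝ (gradient f b) (a - b) : ℝ)) + ‖D‖ ^ 2 := by
    field_simp
  rw [key, key2] at h4
  linarith

end Helpers

set_option maxHeartbeats 1000000 in
theorem stmt4 {p n : ℕ} (hn : 0 < n)
    (Z : Set (EuclideanSpace ℝ (Fin p))) (hZne : Z.Nonempty)
    (hZclosed : IsClosed Z) (hZconvex : Convex ℝ Z)
    (ℓ : Fin n → EuclideanSpace ℝ (Fin p) → ℝ)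
    (hdiff : ∀ i, Differentiable ℝ (ℓ i))
    (hconv : ∀ i u v, ℓ i u + (inner ℝ (gradient (ℓ i) u) (v - u) : ℝ) ≤ ℓ i v)
    (L : ℝ) (hL : 0 < L)
    (hsmooth : ∀ i u v, ‖gradient (ℓ i) u - gradient (ℓ i) v‖ ≤ L * ‖u - v‖)
    (ℓavg : EuclideanSpace ℝ (Fin p) → ℝ)
    (hℓavg : ∀ z, ℓavg z = (1 / (n : ℝ)) * ∑ i, ℓ i z)
    (μ : ℝ) (hμ : 0 < μ)
    (hsc : ∀ u v, ℓavg u + (inner ℝ (gradient ℓavg u) (v - u) : ℝ) +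
      (μ / 2) * ‖v - u‖ ^ 2 ≤ ℓavg v)
    (zstar : EuclideanSpace ℝ (Fin p)) (hzstarZ : zstar ∈ Z)
    (hzstar : ∀ z ∈ Z, ℓavg zstar ≤ ℓavg z)
    (zt : EuclideanSpace ℝ (Fin p)) (hzt : zt ∈ Z)
    (η' : ℝ) (hη'pos : 0 < η') (hη'le : η' ≤ 1 / (2 * L))
    (zbar : Fin n → EuclideanSpace ℝ (Fin p))
    (hproj : ∀ i, zbar i ∈ Z ∧
      ∀ w ∈ Z, ‖zbar i - (zt - η' • gradient (ℓ i) zt)‖ ≤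
        ‖w - (zt - η' • gradient (ℓ i) zt)‖)
    (σ2 : ℝ)
    (hσ2 : σ2 = (1 / (n : ℝ)) * ∑ i, ‖gradient ℓavg zstar - gradient (ℓ i) zstar‖ ^ 2) :
    (1 / (n : ℝ)) * ∑ i, ‖zbar i - zstar‖ ^ 2 ≤
      (1 - μ * η') * ‖zt - zstar‖ ^ 2 + 2 * η' ^ 2 * σ2 := by
  have hN : (0:ℝ) < (n:ℝ) := by exact_mod_cast hn
  -- gradient of the average
  have hgradavg : ∀ z, HasGradientAt ℓavg ((1/(n:ℝ)) • ∑ i, gradient (ℓ i) z) z := by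
    intro z
    rw [hasGradientAt_iff_hasFDerivAt]
    have hsum : HasFDerivAt (fun z => ∑ i, ℓ i z) (∑ i, fderiv ℝ (ℓ i) z) z :=
      HasFDerivAt.fun_sum (fun i _ => (hdiff i z).hasFDerivAt)
    have hm := hsum.const_mul (1/(n:ℝ))
    have hfe : ℓavg = fun z => (1 / (n:ℝ)) * ∑ i, ℓ i z := funext hℓavg
    rw [hfe]
    refine hm.congr_fderiv (Eq.symm ?_)
    rw [map_smul, map_sum]
    congr 1
    refine Finset.sum_congr rfl fun i _ => ?_
    exact (toDual ℝ _).apply_symm_apply _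
  have hgt : gradient ℓavg zt = (1/(n:ℝ)) • ∑ i, gradient (ℓ i) zt :=
    (hgradavg zt).gradient
  have hgs : gradient ℓavg zstar = (1/(n:ℝ)) • ∑ i, gradient (ℓ i) zstar :=
    (hgradavg zstar).gradient
  -- Lipschitz gradient of the average
  have hliavg : ∀ u v, ‖gradient ℓavg u - gradient ℓavg v‖ ≤ L * ‖u - v‖ := by
    intro u v
    rw [(hgradavg u).gradient, (hgradavg v).gradient, ← smul_sub, ← Finset.sum_sub_distrib,
      norm_smul]
    have h1 : ‖∑ i, (gradient (ℓ i) u - gradient (ℓ i) v)‖ ≤ ∑ _i : Fin n, (L * ‖u - v‖) :=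
      (norm_sum_le _ _).trans (Finset.sum_le_sum fun i _ => hsmooth i u v)
    rw [Finset.sum_const, Finset.card_univ, Fintype.card_fin, nsmul_eq_mul] at h1
    have h2 : ‖(1:ℝ)/(n:ℝ)‖ = 1/(n:ℝ) := by
      rw [Real.norm_eq_abs, abs_of_pos (by positivity)]
    rw [h2]
    calc 1/(n:ℝ) * ‖∑ i, (gradient (ℓ i) u - gradient (ℓ i) v)‖
        ≤ 1/(n:ℝ) * ((n:ℝ) * (L * ‖u - v‖)) := by
          apply mul_le_mul_of_nonneg_left h1 (by positivity)
      _ = L * ‖u - v‖ := by field_simp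
  -- variational inequality at zstar
  have hVI : ∀ w ∈ Z, 0 ≤ (inner ℝ (gradient ℓavg zstar) (w - zstar) : ℝ) := by
    intro w hw
    set g := gradient ℓavg zstar with hg
    set d := w - zstar with hd
    have key : ∀ t : ℝ, 0 < t → t ≤ 1 → -(L * t * ‖d‖^2) ≤ (inner ℝ g d : ℝ) := by
      intro t ht0 ht1
      set wt := zstar + t • d with hwt
      have hwtZ : wt ∈ Z := by
        have h := hZconvex hzstarZ hw (by linarith : (0:ℝ) ≤ 1 - t) ht0.le (by ring)
        have he : (1 - t) • zstar + t • w = wt := by rw [hwt, hd]; module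
        rwa [he] at h
      have h1 := hsc wt zstar
      have h2 := hzstar wt hwtZ
      have h3 : (inner ℝ (gradient ℓavg wt) (zstar - wt) : ℝ) ≤ -((μ/2) * ‖zstar - wt‖^2) := by
        linarith
      have h4 : zstar - wt = -(t • d) := by rw [hwt]; abel
      have h5 : 0 ≤ (inner ℝ (gradient ℓavg wt) d : ℝ) := by
        rw [h4, inner_neg_right, real_inner_smul_right] at h3
        have hnn : 0 ≤ (μ/2) * ‖zstar - wt‖^2 := by positivity
        nlinarith
      have h6 : (inner ℝ g d : ℝ) = (inner ℝ (gradient ℓavg wt) d : ℝ)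
          + (inner ℝ (g - gradient ℓavg wt) d : ℝ) := by
        rw [inner_sub_left]; ring
      have h7 := abs_real_inner_le_norm (g - gradient ℓavg wt) d
      have h8 : ‖g - gradient ℓavg wt‖ ≤ L * (t * ‖d‖) := by
        have hh := hliavg zstar wt
        have : ‖zstar - wt‖ = t * ‖d‖ := by
          rw [h4, norm_neg, norm_smul, Real.norm_eq_abs, abs_of_pos ht0]
        rw [this] at hh
        rw [hg]
        exact hh
      have h9 := neg_abs_le (inner ℝ (g - gradient ℓavg wt) d : ℝ)
      have h10 : ‖g - gradient ℓavg wt‖ * ‖d‖ ≤ L * (t * ‖d‖) * ‖d‖ :=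
        mul_le_mul_of_nonneg_right h8 (norm_nonneg d)
      nlinarith
    refine nonneg_of_small_lb (c := L * ‖d‖^2) (by positivity) ?_
    intro t ht0 ht1
    have hk := key t ht0 ht1
    have : -(L * ‖d‖ ^ 2 * t) = -(L * t * ‖d‖ ^ 2) := by ring
    rw [this]
    exact hk
  -- per-index contraction via projection
  have hbar : ∀ i, ‖zbar i - zstar‖^2 ≤
      ‖(zt - zstar) - η' • (gradient (ℓ i) zt - gradient ℓavg zstar)‖^2 := by
    intro i
    obtain ⟨hbZ, hbmin⟩ := hproj i
    have hch := proj_char hZconvex hbZ hbmin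
    have h1 := hch zstar hzstarZ
    have h2 := hVI (zbar i) hbZ
    have key : ‖zbar i - zstar‖^2 ≤
        (inner ℝ ((zt - zstar) - η' • (gradient (ℓ i) zt - gradient ℓavg zstar))
          (zbar i - zstar) : ℝ) := by
      have split : (inner ℝ (zbar i - zstar) (zbar i - zstar) : ℝ) =
          (inner ℝ (zbar i - (zt - η' • gradient (ℓ i) zt)) (zbar i - zstar) : ℝ)
          + (inner ℝ ((zt - zstar) - η' • (gradient (ℓ i) zt - gradient ℓavg zstar))
              (zbar i - zstar) : ℝ)
          + (inner ℝ (-(η' • gradient ℓavg zstar)) (zbar i - zstar) : ℝ) := by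
        rw [← inner_add_left, ← inner_add_left]
        congr 1
        module
      have t1 : (inner ℝ (zbar i - (zt - η' • gradient (ℓ i) zt)) (zbar i - zstar) : ℝ) ≤ 0 := by
        have he : (inner ℝ (zbar i - (zt - η' • gradient (ℓ i) zt)) (zbar i - zstar) : ℝ)
            = (inner ℝ ((zt - η' • gradient (ℓ i) zt) - zbar i) (zstar - zbar i) : ℝ) := by
          rw [show zbar i - (zt - η' • gradient (ℓ i) zt)
              = -((zt - η' • gradient (ℓ i) zt) - zbar i) by abel,
            show zbar i - zstar = -(zstar - zbar i) by abel,
            inner_neg_neg]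
        rw [he]
        exact h1
      have t2 : (inner ℝ (-(η' • gradient ℓavg zstar)) (zbar i - zstar) : ℝ) ≤ 0 := by
        rw [inner_neg_left, real_inner_smul_left]
        have := mul_le_mul_of_nonneg_left h2 hη'pos.le
        simpa using this
      have e1 : (inner ℝ (zbar i - zstar) (zbar i - zstar) : ℝ) = ‖zbar i - zstar‖^2 :=
        real_inner_self_eq_norm_sq _
      linarith
    have cs := real_inner_le_norm ((zt - zstar) - η' • (gradient (ℓ i) zt - gradient ℓavg zstar))
      (zbar i - zstar)
    nlinarith [norm_nonneg (zbar i - zstar),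
      norm_nonneg ((zt - zstar) - η' • (gradient (ℓ i) zt - gradient ℓavg zstar)),
      sq_nonneg (‖zbar i - zstar‖
        - ‖(zt - zstar) - η' • (gradient (ℓ i) zt - gradient ℓavg zstar)‖)]
  -- per-index expanded bound
  have hper : ∀ i, ‖zbar i - zstar‖^2 ≤
      ‖zt - zstar‖^2
      - 2*η'*((inner ℝ (gradient (ℓ i) zt) (zt - zstar) : ℝ)
          - (inner ℝ (gradient ℓavg zstar) (zt - zstar) : ℝ))
      + 4*η'^2*L*(ℓ i zt - ℓ i zstar
          - (inner ℝ (gradient (ℓ i) zstar) (zt - zstar) : ℝ))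
      + 2*η'^2*‖gradient (ℓ i) zstar - gradient ℓavg zstar‖^2 := by
    intro i
    have hco := cocoercive (ℓ i) (hdiff i) L hL (hsmooth i) (hconv i) zt zstar
    have hexp : ‖(zt - zstar) - η' • (gradient (ℓ i) zt - gradient ℓavg zstar)‖^2
        = ‖zt - zstar‖^2
          - 2*η'*(inner ℝ (gradient (ℓ i) zt - gradient ℓavg zstar) (zt - zstar) : ℝ)
          + η'^2*‖gradient (ℓ i) zt - gradient ℓavg zstar‖^2 := by
      rw [norm_sub_sq_real, real_inner_smul_right, norm_smul, Real.norm_eq_abs,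
        abs_of_pos hη'pos, mul_pow,
        real_inner_comm (zt - zstar) (gradient (ℓ i) zt - gradient ℓavg zstar)]
      ring
    have hsplit : gradient (ℓ i) zt - gradient ℓavg zstar
        = (gradient (ℓ i) zt - gradient (ℓ i) zstar)
          + (gradient (ℓ i) zstar - gradient ℓavg zstar) := by abel
    have htri : ‖gradient (ℓ i) zt - gradient ℓavg zstar‖
        ≤ ‖gradient (ℓ i) zt - gradient (ℓ i) zstar‖
          + ‖gradient (ℓ i) zstar - gradient ℓavg zstar‖ := by
      rw [hsplit]; exact norm_add_le _ _
    have hvsq : ‖gradient (ℓ i) zt - gradient ℓavg zstar‖^2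
        ≤ 2*‖gradient (ℓ i) zt - gradient (ℓ i) zstar‖^2
          + 2*‖gradient (ℓ i) zstar - gradient ℓavg zstar‖^2 := by
      nlinarith [norm_nonneg (gradient (ℓ i) zt - gradient ℓavg zstar),
        norm_nonneg (gradient (ℓ i) zt - gradient (ℓ i) zstar),
        norm_nonneg (gradient (ℓ i) zstar - gradient ℓavg zstar),
        sq_nonneg (‖gradient (ℓ i) zt - gradient (ℓ i) zstar‖
          - ‖gradient (ℓ i) zstar - gradient ℓavg zstar‖)]
    have hinner : (inner ℝ (gradient (ℓ i) zt - gradient ℓavg zstar) (zt - zstar) : ℝ)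
        = (inner ℝ (gradient (ℓ i) zt) (zt - zstar) : ℝ)
          - (inner ℝ (gradient ℓavg zstar) (zt - zstar) : ℝ) := inner_sub_left _ _ _
    have hmul : η'^2*‖gradient (ℓ i) zt - gradient ℓavg zstar‖^2
        ≤ η'^2*(2*(2*L*(ℓ i zt - ℓ i zstar
            - (inner ℝ (gradient (ℓ i) zstar) (zt - zstar) : ℝ)))
          + 2*‖gradient (ℓ i) zstar - gradient ℓavg zstar‖^2) := by
      apply mul_le_mul_of_nonneg_left _ (sq_nonneg η')
      linarith
    have hb := hbar i
    rw [hexp, hinner] at hb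
    linarith
  -- sums
  have e1 : ∑ i, (inner ℝ (gradient (ℓ i) zt) (zt - zstar) : ℝ)
      = (n:ℝ) * (inner ℝ (gradient ℓavg zt) (zt - zstar) : ℝ) := by
    rw [hgt, real_inner_smul_left, sum_inner]
    field_simp
  have e2 : ∑ i, (inner ℝ (gradient (ℓ i) zstar) (zt - zstar) : ℝ)
      = (n:ℝ) * (inner ℝ (gradient ℓavg zstar) (zt - zstar) : ℝ) := by
    rw [hgs, real_inner_smul_left, sum_inner]
    field_simp
  have e3 : ∑ i, ℓ i zt = (n:ℝ) * ℓavg zt := by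
    rw [hℓavg zt]; field_simp
  have e4 : ∑ i, ℓ i zstar = (n:ℝ) * ℓavg zstar := by
    rw [hℓavg zstar]; field_simp
  have e5 : ∑ i, ‖gradient (ℓ i) zstar - gradient ℓavg zstar‖^2 = (n:ℝ) * σ2 := by
    rw [hσ2]
    rw [Finset.sum_congr rfl (fun i _ => by rw [norm_sub_rev])]
    field_simp
  have hsum1 : ∑ i, ‖zbar i - zstar‖^2 ≤
      ∑ i, (‖zt - zstar‖^2
        - 2*η'*((inner ℝ (gradient (ℓ i) zt) (zt - zstar) : ℝ)
            - (inner ℝ (gradient ℓavg zstar) (zt - zstar) : ℝ))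
        + 4*η'^2*L*(ℓ i zt - ℓ i zstar
            - (inner ℝ (gradient (ℓ i) zstar) (zt - zstar) : ℝ))
        + 2*η'^2*‖gradient (ℓ i) zstar - gradient ℓavg zstar‖^2) :=
    Finset.sum_le_sum fun i _ => hper i
  have hsum2 : ∑ i, (‖zt - zstar‖^2
        - 2*η'*((inner ℝ (gradient (ℓ i) zt) (zt - zstar) : ℝ)
            - (inner ℝ (gradient ℓavg zstar) (zt - zstar) : ℝ))
        + 4*η'^2*L*(ℓ i zt - ℓ i zstar
            - (inner ℝ (gradient (ℓ i) zstar) (zt - zstar) : ℝ))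
        + 2*η'^2*‖gradient (ℓ i) zstar - gradient ℓavg zstar‖^2)
      = (n:ℝ)*‖zt - zstar‖^2
        - 2*η'*((n:ℝ)*(inner ℝ (gradient ℓavg zt) (zt - zstar) : ℝ)
            - (n:ℝ)*(inner ℝ (gradient ℓavg zstar) (zt - zstar) : ℝ))
        + 4*η'^2*L*((n:ℝ)*ℓavg zt - (n:ℝ)*ℓavg zstar
            - (n:ℝ)*(inner ℝ (gradient ℓavg zstar) (zt - zstar) : ℝ))
        + 2*η'^2*((n:ℝ)*σ2) := by
    rw [Finset.sum_congr rfl (fun i _ => show _ =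
        ‖zt - zstar‖^2 + 2*η'*(inner ℝ (gradient ℓavg zstar) (zt - zstar) : ℝ)
        + (-(2*η'))*(inner ℝ (gradient (ℓ i) zt) (zt - zstar) : ℝ)
        + (4*η'^2*L)*(ℓ i zt)
        + (-(4*η'^2*L))*(ℓ i zstar)
        + (-(4*η'^2*L))*(inner ℝ (gradient (ℓ i) zstar) (zt - zstar) : ℝ)
        + (2*η'^2)*‖gradient (ℓ i) zstar - gradient ℓavg zstar‖^2 by ring)]
    simp only [Finset.sum_add_distrib, ← Finset.mul_sum, Finset.sum_const,
      Finset.card_univ, Fintype.card_fin, nsmul_eq_mul, e1, e2, e3, e4, e5]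
    ring
  -- strong convexity facts
  have hA := hsc zt zstar
  have hB := hsc zstar zt
  have hrev : zstar - zt = -(zt - zstar) := by abel
  rw [hrev, inner_neg_right, norm_neg] at hA
  -- scalar wrap-up
  have hX : (1/(n:ℝ)) * ∑ i, ‖zbar i - zstar‖^2 ≤
      ‖zt - zstar‖^2
      - 2*η'*((inner ℝ (gradient ℓavg zt) (zt - zstar) : ℝ)
          - (inner ℝ (gradient ℓavg zstar) (zt - zstar) : ℝ))
      + 4*η'^2*L*(ℓavg zt - ℓavg zstar
          - (inner ℝ (gradient ℓavg zstar) (zt - zstar) : ℝ))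
      + 2*η'^2*σ2 := by
    rw [hsum2] at hsum1
    have := mul_le_mul_of_nonneg_left hsum1 (by positivity : (0:ℝ) ≤ 1/(n:ℝ))
    calc (1/(n:ℝ)) * ∑ i, ‖zbar i - zstar‖^2 ≤ _ := this
      _ = _ := by field_simp
  have hD : (μ/2) * ‖zt - zstar‖^2 ≤ ℓavg zt - ℓavg zstar
      - (inner ℝ (gradient ℓavg zstar) (zt - zstar) : ℝ) := by linarith
  have hB' : (μ/2) * ‖zt - zstar‖^2 ≤ (inner ℝ (gradient ℓavg zt) (zt - zstar) : ℝ)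
      - (ℓavg zt - ℓavg zstar) := by linarith
  have hetaL : 2*η'*L ≤ 1 := by
    rw [le_div_iff₀ (by linarith : (0:ℝ) < 2*L)] at hη'le
    nlinarith
  have hDnn : 0 ≤ ℓavg zt - ℓavg zstar
      - (inner ℝ (gradient ℓavg zstar) (zt - zstar) : ℝ) :=
    le_trans (by positivity) hD
  have hm1 := mul_le_mul_of_nonneg_left hB' hη'pos.le
  have hm2 : 0 ≤ (2*η') * (ℓavg zt - ℓavg zstar
      - (inner ℝ (gradient ℓavg zstar) (zt - zstar) : ℝ)) * (1 - 2*η'*L) :=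
    mul_nonneg (mul_nonneg (by linarith) hDnn) (by linarith)
  calc (1/(n:ℝ)) * ∑ i, ‖zbar i - zstar‖^2 ≤ _ := hX
    _ ≤ (1 - μ * η') * ‖zt - zstar‖ ^ 2 + 2 * η' ^ 2 * σ2 := by nlinarith [hm1, hm2]
end

section
/- Let (u_t)_{t ≥ 1} be a sequence of non-negative reals, let σ ≥ 0, ε ≥ 0, L ≥ μ > 0 with κ = L/μ, and set the constant step-size η' = 1/(2L) and ρ = 1 − μ/(2L) = 1 − 1/(2κ). Suppose that for every t ≥ 1, u_{t+1}² ≤ ρ u_t² + 2σ²η'² + 2ε u_{t+1}. Then for every T ≥ 1, u_{T+1} ≤ u_1 (1 − 1/(2κ))^{T/2} + σ/√(μL) + 2ε/(1 − √(1 − 1/(2κ))). In terms of the SSO iterates this reads E‖z_{T+1} − z*‖ ≤ ‖z_1 − z*‖(1 − 1/(2κ))^{T/2} + σ/√(μL) + 2ε/(1 − √(1 − 1/(2κ))). -/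
/-!
Completing the square turns the recursion into `u (t + 1) ≤ √(ρ u_t² + c) + 2ε` with
`ρ = 1 - μ/(2L)` and `c = 2σ²η'²`. The map `x ↦ √(ρ x² + c)` is `√ρ`-Lipschitz (it is the
Euclidean norm of `(√ρ x, √c)`), so the bound `√(ρ^T u_1² + K) + D` propagates by induction,
where `K = c/(1 - ρ) = σ²/(μL)` and `D = 2ε/(1 - √ρ)` are the fixed points of
`K ↦ ρK + c` and `D ↦ √ρ D + 2ε`.
-/

open Real

lemma le_sqrt_add_of_sq_le_add_mul {v a ε : ℝ} (hε : 0 ≤ ε) (h : v ^ 2 ≤ a + 2 * ε * v) :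
    v ≤ √a + 2 * ε := by
  rcases le_or_gt v (2 * ε) with hv | hv
  · linarith [sqrt_nonneg a]
  · have hsq : (v - 2 * ε) ^ 2 ≤ a := by nlinarith
    linarith [le_abs_self (v - 2 * ε), abs_le_sqrt hsq]

lemma sqrt_mul_sq_add_le {ρ c x y : ℝ} (hρ : 0 ≤ ρ) (hc : 0 ≤ c) (hxy : x ≤ y) :
    √(ρ * y ^ 2 + c) ≤ √(ρ * x ^ 2 + c) + √ρ * (y - x) := by
  set q := √(ρ * x ^ 2 + c)
  have hq : q ^ 2 = ρ * x ^ 2 + c := sq_sqrt (by positivity)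
  have hρ' : √ρ ^ 2 = ρ := sq_sqrt hρ
  have hxq : √ρ * x ≤ q := by
    refine le_trans (le_abs_self _) (abs_le_sqrt ?_)
    nlinarith
  have hρxq : ρ * x ≤ √ρ * q := by
    calc ρ * x = √ρ * (√ρ * x) := by rw [← mul_assoc, mul_self_sqrt hρ]
      _ ≤ √ρ * q := by gcongr
  have hexpand : (q + √ρ * (y - x)) ^ 2 - (ρ * y ^ 2 + c) = 2 * (y - x) * (√ρ * q - ρ * x) := by
    linear_combination hq + (y - x) ^ 2 * hρ'
  rw [sqrt_le_left (by positivity)]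
  nlinarith [mul_nonneg (sub_nonneg.mpr hxy) (sub_nonneg.mpr hρxq)]

lemma le_sqrt_pow_mul_sq_add_of_sq_le {v : ℕ → ℝ} {ρ c ε : ℝ} (hv : ∀ n, 0 ≤ v n)
    (hρ₀ : 0 ≤ ρ) (hρ₁ : ρ < 1) (hc : 0 ≤ c) (hε : 0 ≤ ε)
    (hrec : ∀ n, v (n + 1) ^ 2 ≤ ρ * v n ^ 2 + c + 2 * ε * v (n + 1)) (n : ℕ) :
    v n ≤ √(ρ ^ n * v 0 ^ 2 + c / (1 - ρ)) + 2 * ε / (1 - √ρ) := by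
  set K := c / (1 - ρ)
  set D := 2 * ε / (1 - √ρ)
  have hsρ : √ρ < 1 := (sqrt_lt_sqrt hρ₀ hρ₁).trans_eq sqrt_one
  have hK₀ : 0 ≤ K := div_nonneg hc (by linarith)
  have hD₀ : 0 ≤ D := div_nonneg (by linarith) (by linarith)
  have hK : ρ * K + c = K := by
    linear_combination -div_mul_cancel₀ c (show 1 - ρ ≠ 0 by linarith)
  have hD : √ρ * D + 2 * ε = D := by
    linear_combination -div_mul_cancel₀ (2 * ε) (show 1 - √ρ ≠ 0 by linarith)
  induction n with
  | zero =>
    have : v 0 ≤ √(v 0 ^ 2 + K) := le_sqrt_of_sq_le (by linarith)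
    simpa using this.trans (le_add_of_nonneg_right hD₀)
  | succ n ih =>
    set B := √(ρ ^ n * v 0 ^ 2 + K)
    have hB : B ^ 2 = ρ ^ n * v 0 ^ 2 + K := sq_sqrt (by positivity)
    have hstep : v (n + 1) ≤ √(ρ * v n ^ 2 + c) + 2 * ε :=
      le_sqrt_add_of_sq_le_add_mul hε (by linarith [hrec n])
    have hmono : √(ρ * v n ^ 2 + c) ≤ √(ρ * (B + D) ^ 2 + c) := by
      gcongr
      exact hv n
    have hlip := sqrt_mul_sq_add_le hρ₀ hc (le_add_of_nonneg_right hD₀ : B ≤ B + D)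
    have hnext : ρ * B ^ 2 + c = ρ ^ (n + 1) * v 0 ^ 2 + K := by
      rw [hB, pow_succ]; linear_combination hK
    rw [hnext, add_sub_cancel_left] at hlip
    linarith

theorem stmt6 (u : ℕ → ℝ) (hu : ∀ t, 0 ≤ u t)
    (σ ε : ℝ) (hσ : 0 ≤ σ) (hε : 0 ≤ ε)
    (L μ : ℝ) (hμ : 0 < μ) (hLμ : μ ≤ L) (κ : ℝ) (hκ : κ = L / μ)
    (hrec : ∀ t, 1 ≤ t →
      u (t + 1) ^ 2 ≤ (1 - μ / (2 * L)) * u t ^ 2 +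
        2 * σ ^ 2 * (1 / (2 * L)) ^ 2 + 2 * ε * u (t + 1)) :
    ∀ T : ℕ, 1 ≤ T →
      u (T + 1) ≤ u 1 * Real.sqrt ((1 - 1 / (2 * κ)) ^ T) + σ / Real.sqrt (μ * L) +
        2 * ε / (1 - Real.sqrt (1 - 1 / (2 * κ))) := by
  intro T _
  have hL : 0 < L := hμ.trans_le hLμ
  set ρ := 1 - μ / (2 * L)
  have hρκ : 1 - 1 / (2 * κ) = ρ := by rw [hκ, ← mul_div_assoc, one_div_div]
  have hρ₀ : 0 ≤ ρ := by
    rw [sub_nonneg, div_le_one (by positivity)]; linarith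
  have hρ₁ : ρ < 1 := sub_lt_self 1 (by positivity)
  have hK : 2 * σ ^ 2 * (1 / (2 * L)) ^ 2 / (1 - ρ) = σ ^ 2 / (μ * L) := by
    simp only [ρ, sub_sub_cancel]; field_simp
  have hbound := le_sqrt_pow_mul_sq_add_of_sq_le (v := fun n ↦ u (n + 1)) (fun n ↦ hu _)
    hρ₀ hρ₁ (by positivity) hε (fun n ↦ hrec (n + 1) (by omega)) T
  have hsplit := sqrt_mul_sq_add_le (pow_nonneg hρ₀ T) (by positivity : 0 ≤ σ ^ 2 / (μ * L))
    (hu 1)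
  rw [hK] at hbound
  rw [hρκ, ← sqrt_sq hσ, ← sqrt_div' _ (by positivity : 0 ≤ μ * L)]
  simp only [zero_pow two_ne_zero, mul_zero, zero_add, sub_zero] at hbound hsplit
  linarith
end

section
/- Fix θ_t ∈ ℝ^d, let f : ℝ^d → ℝ^p be L_f-Lipschitz, set z_t = f(θ_t) and Z = f(ℝ^d), let ℓ_1, …, ℓ_n : ℝ^p → ℝ with ℓ = (1/n)∑_i ℓ_i and z* a minimizer of ℓ over Z. For each i ∈ {1,…,n}, let g̃_i : ℝ^d → ℝ be μ_g-strongly convex and L_g-smooth with κ_g = L_g/μ_g, satisfying g̃_i(θ_t) = ℓ_i(z_t) and g̃_i(θ) ≥ ℓ_i(f(θ)) for all θ; let q̃_i be μ_q-strongly convex; let θ̃_i = argmin g̃_i, θ̄_i = argmin q̃_i, and assume (1/n)∑_i g̃_i = (1/n)∑_i q̃_i =: g. Let θ_i^{(m)} be the result of m steps of gradient descent on g̃_i started at θ_t with step-size 1/L_g, so that ‖θ̃_i − θ_i^{(m)}‖² ≤ exp(−m/κ_g)‖θ̃_i − θ_t‖². Define ζ² := (8/min{μ_g, μ_q})·( [min_θ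 g(θ) − (1/n)∑_i min_θ g̃_i(θ)] + [min_θ g(θ) − (1/n)∑_i min_θ q̃_i(θ)] ) and σ_z² := min_{z ∈ Z} (1/n)∑_i ℓ_i(z) − (1/n)∑_i min_{z ∈ Z} ℓ_i(z). Then (1/n)∑_{i=1}^n ‖f(θ_i^{(m)}) − f(θ̄_i)‖² ≤ L_f² ζ² + (4L_f²/μ_g)·exp(−m/κ_g)·( ℓ(z_t) − ℓ(z*) + σ_z² ). -/
lemma sc_growth {E : Type*} [NormedAddCommGroup E] [NormedSpace ℝ E] {μ : ℝ} {φ : E → ℝ}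
    (h : StrongConvexOn Set.univ μ φ) {xs : E} (hxs : ∀ x, φ xs ≤ φ x) (u : E) :
    μ / 2 * ‖u - xs‖ ^ 2 ≤ φ u - φ xs := by
  set c : ℝ := μ / 2 * ‖u - xs‖ ^ 2 with hc
  have hgap : 0 ≤ φ u - φ xs := sub_nonneg.2 (hxs u)
  have key : ∀ a : ℝ, 0 < a → a ≤ 1 → (1 - a) * c ≤ φ u - φ xs := by
    intro a ha ha1
    have h2 := h.2 (Set.mem_univ u) (Set.mem_univ xs) ha.le
      (by linarith : (0:ℝ) ≤ 1 - a) (by ring)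
    have hmin := hxs (a • u + (1 - a) • xs)
    have : a * ((1 - a) * c) ≤ a * (φ u - φ xs) := by
      simp only [smul_eq_mul, hc] at h2 ⊢
      nlinarith [h2, hmin]
    exact le_of_mul_le_mul_left this ha
  by_contra hlt
  push_neg at hlt
  have hcpos : 0 < c := lt_of_le_of_lt hgap hlt
  set a : ℝ := (c - (φ u - φ xs)) / (2 * c) with hadef
  have ha : 0 < a := div_pos (by linarith) (by linarith)
  have ha1 : a ≤ 1 := by
    rw [hadef, div_le_one (by linarith)]
    linarith
  have heq : (1 - a) * c = c - (c - (φ u - φ xs)) / 2 := by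
    rw [hadef]; field_simp
  nlinarith [key a ha ha1]

theorem stmt8 {d p n : ℕ} (hn : 0 < n)
    (θt : EuclideanSpace ℝ (Fin d))
    (f : EuclideanSpace ℝ (Fin d) → EuclideanSpace ℝ (Fin p))
    (Lf : ℝ) (hLf : 0 ≤ Lf) (hf : ∀ u v, ‖f u - f v‖ ≤ Lf * ‖u - v‖)
    (ℓ : Fin n → EuclideanSpace ℝ (Fin p) → ℝ)
    (ℓavg : EuclideanSpace ℝ (Fin p) → ℝ)
    (hℓavg : ∀ z, ℓavg z = (1 / (n : ℝ)) * ∑ i, ℓ i z)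
    (zstar : EuclideanSpace ℝ (Fin p)) (hzstar : zstar ∈ Set.range f)
    (hzstarmin : ∀ z ∈ Set.range f, ℓavg zstar ≤ ℓavg z)
    (μg Lg μq : ℝ) (hμg : 0 < μg) (hLg : μg ≤ Lg) (hμq : 0 < μq)
    (gt qt : Fin n → EuclideanSpace ℝ (Fin d) → ℝ)
    (hgsc : ∀ i, StrongConvexOn Set.univ μg (gt i))
    (hgdiff : ∀ i, Differentiable ℝ (gt i))
    (hgsmooth : ∀ i u v, ‖gradient (gt i) u - gradient (gt i) v‖ ≤ Lg * ‖u - v‖)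
    (hqsc : ∀ i, StrongConvexOn Set.univ μq (qt i))
    (htight : ∀ i, gt i θt = ℓ i (f θt))
    (hupper : ∀ i θ, ℓ i (f θ) ≤ gt i θ)
    (havg : ∀ θ, ∑ i, gt i θ = ∑ i, qt i θ)
    (θtil θbar : Fin n → EuclideanSpace ℝ (Fin d))
    (hθtil : ∀ i θ, gt i (θtil i) ≤ gt i θ)
    (hθbar : ∀ i θ, qt i (θbar i) ≤ qt i θ)
    (θg : EuclideanSpace ℝ (Fin d))
    (hθg : ∀ θ, (1 / (n : ℝ)) * ∑ i, gt i θg ≤ (1 / (n : ℝ)) * ∑ i, gt i θ)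
    (m : ℕ) (θm : Fin n → EuclideanSpace ℝ (Fin d))
    (hθm : ∀ i, ∃ ω : ℕ → EuclideanSpace ℝ (Fin d), ω 0 = θt ∧
      (∀ k, ω (k + 1) = ω k - (1 / Lg) • gradient (gt i) (ω k)) ∧ θm i = ω m)
    (hθmbound : ∀ i, ‖θtil i - θm i‖ ^ 2 ≤
      Real.exp (-(m : ℝ) / (Lg / μg)) * ‖θtil i - θt‖ ^ 2)
    (zmin : Fin n → EuclideanSpace ℝ (Fin p))
    (hzmin : ∀ i, zmin i ∈ Set.range f ∧ ∀ z ∈ Set.range f, ℓ i (zmin i) ≤ ℓ i z)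
    (ζ2 σz2 : ℝ)
    (hζ2 : ζ2 = (8 / min μg μq) *
      (((1 / (n : ℝ)) * ∑ i, gt i θg - (1 / (n : ℝ)) * ∑ i, gt i (θtil i)) +
        ((1 / (n : ℝ)) * ∑ i, gt i θg - (1 / (n : ℝ)) * ∑ i, qt i (θbar i))))
    (hσz2 : σz2 = ℓavg zstar - (1 / (n : ℝ)) * ∑ i, ℓ i (zmin i)) :
    (1 / (n : ℝ)) * ∑ i, ‖f (θm i) - f (θbar i)‖ ^ 2 ≤
      Lf ^ 2 * ζ2 + (4 * Lf ^ 2 / μg) * Real.exp (-(m : ℝ) / (Lg / μg)) *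
        (ℓavg (f θt) - ℓavg zstar + σz2) := by
  set μm : ℝ := min μg μq with hμmdef
  have hμmpos : 0 < μm := lt_min hμg hμq
  have hμm1 : μm ≤ μg := min_le_left _ _
  have hμm2 : μm ≤ μq := min_le_right _ _
  set e : ℝ := Real.exp (-(m : ℝ) / (Lg / μg)) with he
  have hepos : 0 < e := Real.exp_pos _
  set c : ℝ := (1 / (n : ℝ)) with hcdef
  have hcpos : 0 < c := by
    rw [hcdef]
    exact one_div_pos.2 (Nat.cast_pos.2 hn)
  have hLf2 : (0:ℝ) ≤ Lf ^ 2 := sq_nonneg _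
  -- per-index geometric bound
  have main : ∀ i, ‖f (θm i) - f (θbar i)‖ ^ 2 ≤
      Lf ^ 2 * (2 * ‖θtil i - θm i‖ ^ 2 + 4 * ‖θtil i - θg‖ ^ 2 + 4 * ‖θg - θbar i‖ ^ 2) := by
    intro i
    have h0 : ‖f (θm i) - f (θbar i)‖ ≤ Lf * ‖θm i - θbar i‖ := hf _ _
    have h1 : ‖θm i - θbar i‖ ≤ ‖θm i - θtil i‖ + (‖θtil i - θg‖ + ‖θg - θbar i‖) := by
      have hd : θm i - θbar i = (θm i - θtil i) + ((θtil i - θg) + (θg - θbar i)) := by abel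
      rw [hd]
      exact (norm_add_le _ _).trans (by gcongr; exact norm_add_le _ _)
    have h2 : ‖f (θm i) - f (θbar i)‖ ≤ Lf * (‖θm i - θtil i‖ + (‖θtil i - θg‖ + ‖θg - θbar i‖)) :=
      h0.trans (mul_le_mul_of_nonneg_left h1 hLf)
    have h3 : ‖f (θm i) - f (θbar i)‖ ^ 2 ≤
        (Lf * (‖θm i - θtil i‖ + (‖θtil i - θg‖ + ‖θg - θbar i‖))) ^ 2 :=
      pow_le_pow_left₀ (norm_nonneg _) h2 2
    rw [norm_sub_rev (θtil i) (θm i)]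
    nlinarith [h3, mul_nonneg hLf2 (sq_nonneg (‖θm i - θtil i‖ - ‖θtil i - θg‖ - ‖θg - θbar i‖)),
      mul_nonneg hLf2 (sq_nonneg (‖θtil i - θg‖ - ‖θg - θbar i‖))]
  -- strong convexity growth bounds
  have sg : ∀ (i : Fin n) (u : EuclideanSpace ℝ (Fin d)),
      ‖u - θtil i‖ ^ 2 ≤ 2 / μg * (gt i u - gt i (θtil i)) := by
    intro i u
    have h := sc_growth (hgsc i) (fun x => hθtil i x) u
    calc ‖u - θtil i‖ ^ 2 = (2 / μg) * (μg / 2 * ‖u - θtil i‖ ^ 2) := by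
          field_simp
      _ ≤ (2 / μg) * (gt i u - gt i (θtil i)) :=
          mul_le_mul_of_nonneg_left h (by positivity)
  have sq' : ∀ (i : Fin n) (u : EuclideanSpace ℝ (Fin d)),
      ‖u - θbar i‖ ^ 2 ≤ 2 / μq * (qt i u - qt i (θbar i)) := by
    intro i u
    have h := sc_growth (hqsc i) (fun x => hθbar i x) u
    calc ‖u - θbar i‖ ^ 2 = (2 / μq) * (μq / 2 * ‖u - θbar i‖ ^ 2) := by
          field_simp
      _ ≤ (2 / μq) * (qt i u - qt i (θbar i)) :=
          mul_le_mul_of_nonneg_left h (by positivity)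
  -- summed bounds
  have hS1 : ∑ i, ‖θtil i - θm i‖ ^ 2 ≤
      e * ((2 / μg) * (∑ i, gt i θt - ∑ i, gt i (θtil i))) := by
    calc ∑ i, ‖θtil i - θm i‖ ^ 2 ≤ ∑ i, e * ‖θtil i - θt‖ ^ 2 :=
          Finset.sum_le_sum (fun i _ => hθmbound i)
      _ ≤ ∑ i, e * ((2 / μg) * (gt i θt - gt i (θtil i))) := by
          refine Finset.sum_le_sum (fun i _ => mul_le_mul_of_nonneg_left ?_ hepos.le)
          rw [norm_sub_rev]
          exact sg i θt
      _ = e * ((2 / μg) * (∑ i, gt i θt - ∑ i, gt i (θtil i))) := by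
          rw [← Finset.sum_sub_distrib, ← Finset.mul_sum, ← Finset.mul_sum]
  have hS2 : ∑ i, ‖θtil i - θg‖ ^ 2 ≤
      (2 / μg) * (∑ i, gt i θg - ∑ i, gt i (θtil i)) := by
    calc ∑ i, ‖θtil i - θg‖ ^ 2 ≤ ∑ i, (2 / μg) * (gt i θg - gt i (θtil i)) :=
          Finset.sum_le_sum (fun i _ => by rw [norm_sub_rev]; exact sg i θg)
      _ = _ := by rw [← Finset.sum_sub_distrib, ← Finset.mul_sum]
  have hS3 : ∑ i, ‖θg - θbar i‖ ^ 2 ≤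
      (2 / μq) * (∑ i, qt i θg - ∑ i, qt i (θbar i)) := by
    calc ∑ i, ‖θg - θbar i‖ ^ 2 ≤ ∑ i, (2 / μq) * (qt i θg - qt i (θbar i)) :=
          Finset.sum_le_sum (fun i _ => sq' i θg)
      _ = _ := by rw [← Finset.sum_sub_distrib, ← Finset.mul_sum]
  -- order facts on sums
  have hGt : ∑ i, gt i θt = ∑ i, ℓ i (f θt) :=
    Finset.sum_congr rfl (fun i _ => htight i)
  have hLzGm : ∑ i, ℓ i (zmin i) ≤ ∑ i, gt i (θtil i) :=
    Finset.sum_le_sum (fun i _ =>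
      ((hzmin i).2 _ ⟨θtil i, rfl⟩).trans (hupper i (θtil i)))
  have hGmGg : ∑ i, gt i (θtil i) ≤ ∑ i, gt i θg :=
    Finset.sum_le_sum (fun i _ => hθtil i θg)
  have hQbGg : ∑ i, qt i (θbar i) ≤ ∑ i, gt i θg := by
    rw [havg θg]
    exact Finset.sum_le_sum (fun i _ => hθbar i θg)
  have hQgGg : ∑ i, qt i θg = ∑ i, gt i θg := (havg θg).symm
  -- assemble
  have hmain : ∑ i, ‖f (θm i) - f (θbar i)‖ ^ 2 ≤
      Lf ^ 2 * (2 * ∑ i, ‖θtil i - θm i‖ ^ 2 + 4 * ∑ i, ‖θtil i - θg‖ ^ 2 +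
        4 * ∑ i, ‖θg - θbar i‖ ^ 2) := by
    calc ∑ i, ‖f (θm i) - f (θbar i)‖ ^ 2 ≤
        ∑ i, Lf ^ 2 * (2 * ‖θtil i - θm i‖ ^ 2 + 4 * ‖θtil i - θg‖ ^ 2 +
          4 * ‖θg - θbar i‖ ^ 2) := Finset.sum_le_sum (fun i _ => main i)
      _ = _ := by
          simp only [Finset.mul_sum, mul_add, Finset.sum_add_distrib]
  rw [hζ2, hσz2, hℓavg (f θt), ← hGt]
  have t1 : ((4 * Lf ^ 2 / μg) * e * c) * (∑ i, gt i θt - ∑ i, gt i (θtil i)) ≤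
      ((4 * Lf ^ 2 / μg) * e * c) * (∑ i, gt i θt - ∑ i, ℓ i (zmin i)) :=
    mul_le_mul_of_nonneg_left (by linarith) (by positivity)
  have hdiv1 : (8:ℝ) / μg ≤ 8 / μm := by
    apply div_le_div_of_nonneg_left (by norm_num) hμmpos hμm1
  have hdiv2 : (8:ℝ) / μq ≤ 8 / μm := by
    apply div_le_div_of_nonneg_left (by norm_num) hμmpos hμm2
  have t2 : (Lf ^ 2 * c * (∑ i, gt i θg - ∑ i, gt i (θtil i))) * (8 / μg) ≤
      (Lf ^ 2 * c * (∑ i, gt i θg - ∑ i, gt i (θtil i))) * (8 / μm) :=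
    mul_le_mul_of_nonneg_left hdiv1
      (mul_nonneg (mul_nonneg hLf2 hcpos.le) (by linarith))
  have t3 : (Lf ^ 2 * c * (∑ i, gt i θg - ∑ i, qt i (θbar i))) * (8 / μq) ≤
      (Lf ^ 2 * c * (∑ i, gt i θg - ∑ i, qt i (θbar i))) * (8 / μm) :=
    mul_le_mul_of_nonneg_left hdiv2
      (mul_nonneg (mul_nonneg hLf2 hcpos.le) (by linarith))
  calc c * ∑ i, ‖f (θm i) - f (θbar i)‖ ^ 2
      ≤ c * (Lf ^ 2 * (2 * ∑ i, ‖θtil i - θm i‖ ^ 2 + 4 * ∑ i, ‖θtil i - θg‖ ^ 2 +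
          4 * ∑ i, ‖θg - θbar i‖ ^ 2)) := mul_le_mul_of_nonneg_left hmain hcpos.le
    _ ≤ c * (Lf ^ 2 * (2 * (e * ((2 / μg) * (∑ i, gt i θt - ∑ i, gt i (θtil i)))) +
          4 * ((2 / μg) * (∑ i, gt i θg - ∑ i, gt i (θtil i))) +
          4 * ((2 / μq) * (∑ i, qt i θg - ∑ i, qt i (θbar i))))) := by
        refine mul_le_mul_of_nonneg_left (mul_le_mul_of_nonneg_left ?_ hLf2) hcpos.le
        linarith
    _ = ((4 * Lf ^ 2 / μg) * e * c) * (∑ i, gt i θt - ∑ i, gt i (θtil i)) +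
        (Lf ^ 2 * c * (∑ i, gt i θg - ∑ i, gt i (θtil i))) * (8 / μg) +
        (Lf ^ 2 * c * (∑ i, gt i θg - ∑ i, qt i (θbar i))) * (8 / μq) := by
        rw [hQgGg]; ring
    _ ≤ ((4 * Lf ^ 2 / μg) * e * c) * (∑ i, gt i θt - ∑ i, ℓ i (zmin i)) +
        (Lf ^ 2 * c * (∑ i, gt i θg - ∑ i, gt i (θtil i))) * (8 / μm) +
        (Lf ^ 2 * c * (∑ i, gt i θg - ∑ i, qt i (θbar i))) * (8 / μm) :=
        add_le_add (add_le_add t1 t2) t3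
    _ = Lf ^ 2 * ((8 / μm) * ((c * ∑ i, gt i θg - c * ∑ i, gt i (θtil i)) +
          (c * ∑ i, gt i θg - c * ∑ i, qt i (θbar i)))) +
        (4 * Lf ^ 2 / μg) * e * (c * ∑ i, gt i θt - ℓavg zstar +
          (ℓavg zstar - c * ∑ i, ℓ i (zmin i))) := by ring
end

section
/- Consider minimizing h(θ) = (h_1(θ) + h_2(θ))/2 with h_1(θ) = (1/2)(θ − 1)² and h_2(θ) = (1/2)(2θ + 1/2)², whose minimizer is θ* = 0. Running SSO with exact surrogate minimization (m = ∞) and step-sizes η_t = c·α_t with c ∈ (0,1] and any sequence α_t ∈ (0, 1/c] gives, when component 1 is sampled, θ_{t+1} = (1 − cα_t)θ_t + cα_t, and when component 2 is sampled, θ_{t+1} = (1 − cα_t)θ_t − (1/4)cα_t; hence with each component sampled with probability 1/2 independently at each step, the expected iterate satisfies E θ_{t+1} = (1 − cα_t) E θ_t + (3/8)cα_t, and therefore E θ_T = θ_1 ∏_{t=1}^{T−1}(1 − cα_t) + (3/8)∑_{t=1}^{T−1} cα_t ∏_{i=t+1}^{T−1}(1 − cα_i). Consequently, if θ_1 > 0,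 then E(θ_T − θ*) = E θ_T ≥ min(θ_1, 3/8) for every T and every such sequence (α_t); in particular SSO with exact surrogate minimization converges at best to a neighbourhood of the solution. -/
/-!
Both components have the form ℓ(z) with z linear in θ, and exact minimization of the surrogate
`ℓ(z_t) + ℓ'(z_t)(z - z_t) + (z - z_t)²/(2η)` is the gradient step `z = z_t - η ℓ'(z_t)`. Averaging the
two resulting affine updates gives `Eθ_{t+1} = (1 - η_t) Eθ_t + (3/8) η_t`: each expected iterate is a
convex combination of the previous one and `3/8`, so it never drops below `min θ₁ (3/8)`, however
the step-sizes are chosen.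
-/

open Finset

theorem quadratic_surrogate_le_of_eq_sub {η : ℝ} (hη : 0 < η) {a g z z' : ℝ}
    (hz' : z' = z - η * g) (w : ℝ) :
    a + g * (z' - z) + 1 / (2 * η) * (z' - z) ^ 2 ≤ a + g * (w - z) + 1 / (2 * η) * (w - z) ^ 2 := by
  have gap : (a + g * (w - z) + 1 / (2 * η) * (w - z) ^ 2) -
      (a + g * (z' - z) + 1 / (2 * η) * (z' - z) ^ 2) = 1 / (2 * η) * (w - z') ^ 2 := by
    subst hz'
    field_simp
    ring
  have : 0 ≤ 1 / (2 * η) * (w - z') ^ 2 := by positivity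
  linarith

theorem affine_recurrence_eq_prod_add_sum {R : Type*} [CommRing R] (x a : ℕ → R) (b : R)
    (hx : ∀ t, 1 ≤ t → x (t + 1) = (1 - a t) * x t + b * a t) (T : ℕ) :
    x (T + 1) = x 1 * ∏ t ∈ Icc 1 T, (1 - a t) +
      b * ∑ t ∈ Icc 1 T, a t * ∏ i ∈ Icc (t + 1) T, (1 - a i) := by
  induction T with
  | zero => simp
  | succ T ih =>
    have hsum : ∑ t ∈ Icc 1 T, a t * ∏ i ∈ Icc (t + 1) (T + 1), (1 - a i) =
        (∑ t ∈ Icc 1 T, a t * ∏ i ∈ Icc (t + 1) T, (1 - a i)) * (1 - a (T + 1)) := by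
      rw [sum_mul]
      refine sum_congr rfl fun t ht => ?_
      rw [prod_Icc_succ_top (by grind), mul_assoc]
    rw [hx (T + 1) (by omega), ih, prod_Icc_succ_top (Nat.le_add_left 1 T),
      sum_Icc_succ_top (Nat.le_add_left 1 T), hsum,
      Icc_eq_empty (show ¬T + 1 + 1 ≤ T + 1 by omega), prod_empty]
    ring

theorem min_le_of_affine_recurrence {K : Type*} [CommRing K] [LinearOrder K] [IsOrderedRing K]
    (x a : ℕ → K) (b : K) (ha : ∀ t, 0 ≤ a t ∧ a t ≤ 1)
    (hx : ∀ t, 1 ≤ t → x (t + 1) = (1 - a t) * x t + b * a t) :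
    ∀ T, 1 ≤ T → min (x 1) b ≤ x T := by
  intro T hT
  induction T, hT using Nat.le_induction with
  | base => exact min_le_left _ _
  | succ T hT ih =>
    have hb : min (x 1) b ≤ b := min_le_right _ _
    calc min (x 1) b = (1 - a T) * min (x 1) b + min (x 1) b * a T := by ring
      _ ≤ (1 - a T) * x T + b * a T :=
        add_le_add (mul_le_mul_of_nonneg_left ih (sub_nonneg.2 (ha T).2))
          (mul_le_mul_of_nonneg_right hb (ha T).1)
      _ = x (T + 1) := (hx T hT).symm

theorem stmt9_general (c : ℝ) (hc0 : 0 < c)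
    (αs : ℕ → ℝ) (hαs : ∀ t, 0 < αs t ∧ αs t ≤ 1 / c) (θ1 : ℝ) :
    -- the minimizer of h(θ) = (h₁(θ) + h₂(θ))/2 is θ* = 0
    (∀ θ : ℝ, ((1 / 2) * ((0 : ℝ) - 1) ^ 2 + (1 / 2) * (2 * 0 + 1 / 2) ^ 2) / 2 ≤
      ((1 / 2) * (θ - 1) ^ 2 + (1 / 2) * (2 * θ + 1 / 2) ^ 2) / 2) ∧
    (∀ t : ℕ, ∀ θt : ℝ,
      -- sampling component 1: exact surrogate minimization gives (1 - cα_t)θ_t + cα_t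
      (∀ θ' : ℝ,
        (1 / 2) * (θt - 1) ^ 2 +
            (θt - 1) * (((1 - c * αs t) * θt + c * αs t) - θt) +
            (1 / (2 * (c * αs t))) * (((1 - c * αs t) * θt + c * αs t) - θt) ^ 2 ≤
          (1 / 2) * (θt - 1) ^ 2 + (θt - 1) * (θ' - θt) +
            (1 / (2 * (c * αs t))) * (θ' - θt) ^ 2) ∧
      -- sampling component 2: exact surrogate minimization gives (1 - cα_t)θ_t - (1/4)cα_t
      (∀ θ' : ℝ,
        (1 / 2) * (2 * θt + 1 / 2) ^ 2 +
            (2 * θt + 1 / 2) * (2 * ((1 - c * αs t) * θt - (1 / 4) * (c * αs t)) - 2 * θt) +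
            (1 / (2 * (c * αs t))) *
              (2 * ((1 - c * αs t) * θt - (1 / 4) * (c * αs t)) - 2 * θt) ^ 2 ≤
          (1 / 2) * (2 * θt + 1 / 2) ^ 2 + (2 * θt + 1 / 2) * (2 * θ' - 2 * θt) +
            (1 / (2 * (c * αs t))) * (2 * θ' - 2 * θt) ^ 2) ∧
      -- each component sampled with probability 1/2: expected next iterate
      (((1 - c * αs t) * θt + c * αs t) +
          ((1 - c * αs t) * θt - (1 / 4) * (c * αs t))) / 2 =
        (1 - c * αs t) * θt + (3 / 8) * (c * αs t)) ∧
    (∀ Eθ : ℕ → ℝ, Eθ 1 = θ1 →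
      (∀ t, 1 ≤ t → Eθ (t + 1) = (1 - c * αs t) * Eθ t + (3 / 8) * (c * αs t)) →
      ∀ T, 1 ≤ T →
        Eθ T = θ1 * (∏ t ∈ Finset.Icc 1 (T - 1), (1 - c * αs t)) +
            (3 / 8) * ∑ t ∈ Finset.Icc 1 (T - 1),
              c * αs t * ∏ i ∈ Finset.Icc (t + 1) (T - 1), (1 - c * αs i) ∧
          (0 < θ1 → min θ1 (3 / 8) ≤ Eθ T)) := by
  have hη : ∀ t, 0 < c * αs t := fun t => mul_pos hc0 (hαs t).1
  have hη_le : ∀ t, c * αs t ≤ 1 := fun t => (le_div_iff₀' hc0).mp (one_div c ▸ (hαs t).2)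
  refine ⟨fun θ => by nlinarith [sq_nonneg θ], fun t θt => ⟨?_, ?_, by ring⟩, ?_⟩
  · exact quadratic_surrogate_le_of_eq_sub (hη t) (by ring)
  · exact fun θ' => quadratic_surrogate_le_of_eq_sub (hη t) (by ring) (2 * θ')
  · intro Eθ hE1 hrec T hT
    obtain ⟨S, rfl⟩ := Nat.exists_eq_add_of_le' hT
    rw [Nat.add_sub_cancel, ← hE1]
    refine ⟨affine_recurrence_eq_prod_add_sum Eθ (fun t => c * αs t) (3 / 8) hrec S, fun _ => ?_⟩
    exact min_le_of_affine_recurrence Eθ (fun t => c * αs t) (3 / 8)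
      (fun t => ⟨(hη t).le, hη_le t⟩) hrec (S + 1) hT

theorem stmt9 (c : ℝ) (hc0 : 0 < c) (hc1 : c ≤ 1)
    (αs : ℕ → ℝ) (hαs : ∀ t, 0 < αs t ∧ αs t ≤ 1 / c) (θ1 : ℝ) :
    -- the minimizer of h(θ) = (h₁(θ) + h₂(θ))/2 is θ* = 0
    (∀ θ : ℝ, ((1 / 2) * ((0 : ℝ) - 1) ^ 2 + (1 / 2) * (2 * 0 + 1 / 2) ^ 2) / 2 ≤
      ((1 / 2) * (θ - 1) ^ 2 + (1 / 2) * (2 * θ + 1 / 2) ^ 2) / 2) ∧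
    (∀ t : ℕ, ∀ θt : ℝ,
      -- sampling component 1: exact surrogate minimization gives (1 - cα_t)θ_t + cα_t
      (∀ θ' : ℝ,
        (1 / 2) * (θt - 1) ^ 2 +
            (θt - 1) * (((1 - c * αs t) * θt + c * αs t) - θt) +
            (1 / (2 * (c * αs t))) * (((1 - c * αs t) * θt + c * αs t) - θt) ^ 2 ≤
          (1 / 2) * (θt - 1) ^ 2 + (θt - 1) * (θ' - θt) +
            (1 / (2 * (c * αs t))) * (θ' - θt) ^ 2) ∧
      -- sampling component 2: exact surrogate minimization gives (1 - cα_t)θ_t - (1/4)cα_t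
      (∀ θ' : ℝ,
        (1 / 2) * (2 * θt + 1 / 2) ^ 2 +
            (2 * θt + 1 / 2) * (2 * ((1 - c * αs t) * θt - (1 / 4) * (c * αs t)) - 2 * θt) +
            (1 / (2 * (c * αs t))) *
              (2 * ((1 - c * αs t) * θt - (1 / 4) * (c * αs t)) - 2 * θt) ^ 2 ≤
          (1 / 2) * (2 * θt + 1 / 2) ^ 2 + (2 * θt + 1 / 2) * (2 * θ' - 2 * θt) +
            (1 / (2 * (c * αs t))) * (2 * θ' - 2 * θt) ^ 2) ∧
      -- each component sampled with probability 1/2: expected next iterate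
      (((1 - c * αs t) * θt + c * αs t) +
          ((1 - c * αs t) * θt - (1 / 4) * (c * αs t))) / 2 =
        (1 - c * αs t) * θt + (3 / 8) * (c * αs t)) ∧
    (∀ Eθ : ℕ → ℝ, Eθ 1 = θ1 →
      (∀ t, 1 ≤ t → Eθ (t + 1) = (1 - c * αs t) * Eθ t + (3 / 8) * (c * αs t)) →
      ∀ T, 1 ≤ T →
        Eθ T = θ1 * (∏ t ∈ Finset.Icc 1 (T - 1), (1 - c * αs t)) +
            (3 / 8) * ∑ t ∈ Finset.Icc 1 (T - 1),
              c * αs t * ∏ i ∈ Finset.Icc (t + 1) (T - 1), (1 - c * αs i) ∧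
          (0 < θ1 → min θ1 (3 / 8) ≤ Eθ T)) :=
  stmt9_general c hc0 αs hαs θ1
end

section
/- Let T ≥ 1 be an integer and 0 < β < T, and set α = (β/T)^{1/T}, so 0 < α < 1. Then ∑_{t=1}^T α^t ≥ αT/ln(T/β) − 2β/ln(T/β). -/
/-! With `α = (β/T)^(1/T)` we have `α^T = β/T` and `-log α = log(T/β)/T`, so the geometric sum
equals `α(1 - β/T)/(1 - α)`. Since `1 - α ≤ -log α`, it is at least `(αT - αβ)/log(T/β)`,
and `αβ ≤ β ≤ 2β`. -/

open Finset Real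

theorem sum_Icc_one_pow_eq {K : Type*} [Field K] {x : K} (hx : x ≠ 1) (n : ℕ) :
    ∑ i ∈ Icc 1 n, x ^ i = x * (1 - x ^ n) / (1 - x) := by
  have hx' : 1 - x ≠ 0 := sub_ne_zero.mpr hx.symm
  rw [← Ico_add_one_right_eq_Icc, geom_sum_Ico hx (by omega), eq_div_iff hx',
    div_mul_eq_mul_div, div_eq_iff (sub_ne_zero.mpr hx)]
  ring

theorem mul_one_sub_pow_div_neg_log_le_sum_Icc_pow {x : ℝ} (hx₀ : 0 < x) (hx₁ : x < 1) (n : ℕ) :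
    x * (1 - x ^ n) / -log x ≤ ∑ i ∈ Icc 1 n, x ^ i := by
  rw [sum_Icc_one_pow_eq hx₁.ne]
  have hxn : x ^ n ≤ 1 := pow_le_one₀ hx₀.le hx₁.le
  exact div_le_div_of_nonneg_left (by nlinarith) (by linarith)
    (by linarith [log_le_sub_one_of_pos hx₀])

theorem stmt12 (T : ℕ) (hT : 1 ≤ T) (β : ℝ) (hβ : 0 < β) (hβT : β < T)
    (α : ℝ) (hα : α = (β / T) ^ ((T : ℝ)⁻¹)) :
    α * T / Real.log (T / β) - 2 * β / Real.log (T / β) ≤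
      ∑ t ∈ Finset.Icc 1 T, α ^ t := by
  have hT₀ : (0 : ℝ) < T := by exact_mod_cast hT
  have hq₀ : 0 < β / T := div_pos hβ hT₀
  have hq₁ : β / T < 1 := (div_lt_one hT₀).mpr hβT
  have hα₀ : 0 < α := hα ▸ rpow_pos_of_pos hq₀ _
  have hα₁ : α < 1 := hα ▸ rpow_lt_one hq₀.le hq₁ (by positivity)
  have hαT : α ^ T = β / T := hα ▸ rpow_inv_natCast_pow hq₀.le (by omega)
  set L := log (T / β)
  have hL : 0 < L := log_pos ((one_lt_div hβ).mpr hβT)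
  have hlogα : -log α = L / T := by
    rw [hα, log_rpow hq₀, ← inv_div, log_inv]
    ring
  calc α * T / L - 2 * β / L
      ≤ (α * T - α * β) / L := by
        rw [← sub_div]
        gcongr
        nlinarith
    _ = α * (1 - β / T) / (L / T) := by field_simp
    _ ≤ ∑ t ∈ Icc 1 T, α ^ t := by
        simpa only [hαT, hlogα] using mul_one_sub_pow_div_neg_log_le_sum_Icc_pow hα₀ hα₁ T
end

section
/- Let T ≥ 1 be an integer and 0 < β < T, and set α = (β/T)^{1/T}, so 0 < α < 1. Then α^{T+1}/(1 − α) ≤ 2β/ln(T/β). -/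
theorem stmt13 (T : ℕ) (hT : 1 ≤ T) (β : ℝ) (hβ : 0 < β) (hβT : β < T)
    (α : ℝ) (hα : α = (β / T) ^ ((T : ℝ)⁻¹)) :
    α ^ (T + 1) / (1 - α) ≤ 2 * β / Real.log (T / β) := by
  have hTpos : (0 : ℝ) < T := lt_trans hβ hβT
  have hratio : 0 < β / T := div_pos hβ hTpos
  have hratio1 : β / T < 1 := (div_lt_one hTpos).mpr hβT
  have hαpos : 0 < α := by rw [hα]; positivity
  have hα1 : α < 1 := by
    rw [hα]
    exact Real.rpow_lt_one hratio.le hratio1 (by positivity)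
  have h1α : 0 < 1 - α := by linarith
  have hαT : α ^ T = β / T := by
    rw [hα, ← Real.rpow_natCast ((β / T) ^ ((T : ℝ)⁻¹)) T, ← Real.rpow_mul hratio.le,
      inv_mul_cancel₀ (by positivity : (T : ℝ) ≠ 0), Real.rpow_one]
  have hlogα : Real.log (T / β) = -(T : ℝ) * Real.log α := by
    have : Real.log α = (T : ℝ)⁻¹ * Real.log (β / T) := by
      rw [hα, Real.log_rpow hratio]
    rw [this]
    rw [Real.log_div (by positivity) (by positivity), Real.log_div (by positivity) (by positivity)]
    field_simp
    ring
  have hLpos : 0 < Real.log (T / β) := Real.log_pos ((one_lt_div hβ).mpr hβT)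
  -- log (1/α) ≤ 1/α - 1
  have hkey : -Real.log α ≤ 1 / α - 1 := by
    have := Real.log_le_sub_one_of_pos (show (0:ℝ) < 1/α by positivity)
    rwa [Real.log_div one_ne_zero (ne_of_gt hαpos), Real.log_one, zero_sub] at this
  have hLle : Real.log (T / β) ≤ (T : ℝ) * (1 - α) / α := by
    rw [hlogα]
    have : (T : ℝ) * (1 - α) / α = (T : ℝ) * (1 / α - 1) := by field_simp
    rw [this, neg_mul, neg_le]
    nlinarith [mul_le_mul_of_nonneg_left hkey hTpos.le]
  rw [div_le_div_iff₀ h1α hLpos, pow_succ, hαT]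
  calc β / T * α * Real.log (T / β) ≤ β / T * α * ((T : ℝ) * (1 - α) / α) := by
        apply mul_le_mul_of_nonneg_left hLle; positivity
    _ = β * (1 - α) := by field_simp
    _ ≤ 2 * β * (1 - α) := by nlinarith
end

section
/- Let T ≥ 1 be an integer, 0 < β < T, α = (β/T)^{1/T}, and κ > 0. Let c₂ = exp( (1/(2κ))·(2β/ln(T/β)) ). Then ∑_{t=1}^T α^{2t} exp( −(1/(2κ)) ∑_{i=t+1}^T α^i ) ≤ 16 κ² c₂ (ln(T/β))² / (e² α² T). -/
/-!
With `y = α ^ (t + 1)` and `s = 1 / (2κ(1 - α))`, the `t`-th term is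
`α⁻² · y² e^{-s y} · e^{s α^{T+1}}`. The elementary bound `y² e^{-s y} ≤ (2 / (e s))²`
makes every term at most `16 κ² (1 - α)² c₂ / (e² α²)`, once
`α^{T+1} / (1 - α) ≤ β / log (T / β)` is used to bound the last factor by `c₂`.
Summing `T` terms and using `1 - α ≤ log α⁻¹ = log (T / β) / T` gives the claim.
-/

open Real Finset

namespace Real

theorem exp_neg_le_div_pow {x : ℝ} (hx : 0 < x) {n : ℕ} (hn : n ≠ 0) :
    exp (-x) ≤ (n / (exp 1 * x)) ^ n := by
  have hn' : (0 : ℝ) < n := by positivity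
  have hbase : exp 1 * x / n ≤ exp (x / n) :=
    calc exp 1 * x / n = exp 1 * (x / n - 1 + 1) := by ring
      _ ≤ exp 1 * exp (x / n - 1) := by gcongr; exact add_one_le_exp _
      _ = exp (x / n) := by rw [← exp_add]; ring_nf
  have hpow : (exp 1 * x / n) ^ n ≤ exp x := by
    calc (exp 1 * x / n) ^ n ≤ exp (x / n) ^ n := by gcongr
      _ = exp x := by rw [← exp_nat_mul, mul_div_cancel₀ _ hn'.ne']
  rw [exp_neg, ← inv_div, inv_pow]
  exact inv_anti₀ (by positivity) hpow

theorem sq_mul_exp_neg_mul_le {s y : ℝ} (hs : 0 < s) (hy : 0 < y) :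
    y ^ 2 * exp (-(s * y)) ≤ 4 / (exp 1 ^ 2 * s ^ 2) := by
  have h := exp_neg_le_div_pow (mul_pos hs hy) two_ne_zero
  calc y ^ 2 * exp (-(s * y)) ≤ y ^ 2 * ((2 : ℕ) / (exp 1 * (s * y))) ^ 2 := by gcongr
    _ = 4 / (exp 1 ^ 2 * s ^ 2) := by field_simp; norm_num

theorem mul_log_inv_le_one_sub {α : ℝ} (hα : 0 < α) : α * log α⁻¹ ≤ 1 - α := by
  have h := log_le_sub_one_of_pos (inv_pos.mpr hα)
  calc α * log α⁻¹ ≤ α * (α⁻¹ - 1) := by gcongr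
    _ = 1 - α := by field_simp

theorem pow_succ_div_one_sub_le {α : ℝ} (hα0 : 0 < α) (hα1 : α < 1) (n : ℕ) :
    α ^ (n + 1) / (1 - α) ≤ α ^ n / log α⁻¹ := by
  have hlog : 0 < log α⁻¹ := log_pos ((one_lt_inv₀ hα0).mpr hα1)
  calc α ^ (n + 1) / (1 - α) ≤ α ^ (n + 1) / (α * log α⁻¹) :=
        div_le_div_of_nonneg_left (by positivity) (by positivity) (mul_log_inv_le_one_sub hα0)
    _ = α ^ n / log α⁻¹ := by rw [pow_succ', mul_div_mul_left _ _ hα0.ne']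

end Real

theorem pow_two_mul_mul_exp_neg_geom_tail_le {α κ : ℝ} (hα0 : 0 < α) (hα1 : α < 1) (hκ : 0 < κ)
    {t T : ℕ} (htT : t ≤ T) :
    α ^ (2 * t) * exp (-(1 / (2 * κ)) * ∑ i ∈ Icc (t + 1) T, α ^ i) ≤
      16 * κ ^ 2 * (1 - α) ^ 2 / (exp 1 ^ 2 * α ^ 2) *
        exp (1 / (2 * κ) * (α ^ (T + 1) / (1 - α))) := by
  have h1α : 0 < 1 - α := sub_pos.mpr hα1
  set s := 1 / (2 * κ * (1 - α)) with hs
  set y := α ^ (t + 1) with hy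
  have hsum : -(1 / (2 * κ)) * ∑ i ∈ Icc (t + 1) T, α ^ i =
      -(s * y) + 1 / (2 * κ) * (α ^ (T + 1) / (1 - α)) := by
    rw [← Ico_add_one_right_eq_Icc, geom_sum_Ico' hα1.ne (by omega), hs, hy]
    field_simp
    ring
  have hpow : α ^ (2 * t) = y ^ 2 / α ^ 2 := by
    rw [hy, ← pow_mul, eq_div_iff (by positivity), ← pow_add]
    ring_nf
  rw [hsum, exp_add, hpow]
  calc y ^ 2 / α ^ 2 * (exp (-(s * y)) * exp (1 / (2 * κ) * (α ^ (T + 1) / (1 - α))))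
      = y ^ 2 * exp (-(s * y)) / α ^ 2 * exp (1 / (2 * κ) * (α ^ (T + 1) / (1 - α))) := by ring
    _ ≤ 4 / (exp 1 ^ 2 * s ^ 2) / α ^ 2 * exp (1 / (2 * κ) * (α ^ (T + 1) / (1 - α))) := by
        gcongr
        exact sq_mul_exp_neg_mul_le (by positivity) (by positivity)
    _ = 16 * κ ^ 2 * (1 - α) ^ 2 / (exp 1 ^ 2 * α ^ 2) *
          exp (1 / (2 * κ) * (α ^ (T + 1) / (1 - α))) := by
        rw [hs]; field_simp; ring

theorem stmt14_general (T : ℕ) (β : ℝ) (hβ : 0 < β) (hβT : β < T)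
    (α : ℝ) (hα : α = (β / T) ^ ((T : ℝ)⁻¹)) (κ : ℝ) (hκ : 0 < κ) :
    ∑ t ∈ Finset.Icc 1 T,
        α ^ (2 * t) * Real.exp (-(1 / (2 * κ)) * ∑ i ∈ Finset.Icc (t + 1) T, α ^ i) ≤
      16 * κ ^ 2 * Real.exp ((1 / (2 * κ)) * (2 * β / Real.log (T / β))) *
          Real.log (T / β) ^ 2 / (Real.exp 1 ^ 2 * α ^ 2 * T) := by
  set L := log (T / β)
  have hT0 : (0 : ℝ) < T := hβ.trans hβT
  have hL : 0 < L := log_pos ((one_lt_div hβ).mpr hβT)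
  have hα0 : 0 < α := hα ▸ rpow_pos_of_pos (by positivity) _
  have hα1 : α < 1 := hα ▸ rpow_lt_one (by positivity) ((div_lt_one hT0).mpr hβT) (by positivity)
  have hαT : α ^ T = β / T := hα ▸ rpow_inv_natCast_pow (by positivity) (Nat.cast_pos.mp hT0).ne'
  have hlog : log α⁻¹ = L / T := by
    rw [hα, ← rpow_neg (by positivity), log_rpow (by positivity), ← inv_div, log_inv]
    ring
  set c := 16 * κ ^ 2 * (1 - α) ^ 2 / (exp 1 ^ 2 * α ^ 2) *
    exp (1 / (2 * κ) * (2 * β / L))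
  have hterm : ∀ t ∈ Icc 1 T,
      α ^ (2 * t) * exp (-(1 / (2 * κ)) * ∑ i ∈ Icc (t + 1) T, α ^ i) ≤ c := by
    intro t ht
    refine (pow_two_mul_mul_exp_neg_geom_tail_le hα0 hα1 hκ (mem_Icc.mp ht).2).trans ?_
    have htail : α ^ (T + 1) / (1 - α) ≤ 2 * β / L := by
      calc α ^ (T + 1) / (1 - α) ≤ α ^ T / log α⁻¹ := pow_succ_div_one_sub_le hα0 hα1 T
        _ = β / L := by rw [hαT, hlog]; field_simp
        _ ≤ 2 * β / L := by gcongr; linarith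
    dsimp only [c]
    gcongr
  have h1α : 1 - α ≤ L / T := by
    simpa [hlog] using one_sub_inv_le_log_of_pos (inv_pos.mpr hα0)
  calc _ ≤ (Icc 1 T).card • c := sum_le_card_nsmul _ _ _ hterm
    _ = T * c := by rw [Nat.card_Icc, Nat.add_sub_cancel, nsmul_eq_mul]
    _ = 16 * κ ^ 2 * exp (1 / (2 * κ) * (2 * β / L)) / (exp 1 ^ 2 * α ^ 2) *
          (T * (1 - α) ^ 2) := by ring
    _ ≤ 16 * κ ^ 2 * exp (1 / (2 * κ) * (2 * β / L)) / (exp 1 ^ 2 * α ^ 2) *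
          (T * (L / T) ^ 2) := by gcongr
    _ = _ := by field_simp

theorem stmt14 (T : ℕ) (hT : 1 ≤ T) (β : ℝ) (hβ : 0 < β) (hβT : β < T)
    (α : ℝ) (hα : α = (β / T) ^ ((T : ℝ)⁻¹)) (κ : ℝ) (hκ : 0 < κ) :
    ∑ t ∈ Finset.Icc 1 T,
        α ^ (2 * t) * Real.exp (-(1 / (2 * κ)) * ∑ i ∈ Finset.Icc (t + 1) T, α ^ i) ≤
      16 * κ ^ 2 * Real.exp ((1 / (2 * κ)) * (2 * β / Real.log (T / β))) *
          Real.log (T / β) ^ 2 / (Real.exp 1 ^ 2 * α ^ 2 * T) :=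
  stmt14_general T β hβ hβT α hα κ hκ
end

section
/- Let (v_τ)_{τ ≥ 0} and (λ_t)_{t ≥ 1} be sequences of non-negative reals, and let (S_τ)_{τ ≥ 0} be a non-decreasing sequence of reals with S_0 ≥ v_0². Suppose that for every τ ≥ 1, v_τ² ≤ S_τ + ∑_{t=1}^τ λ_t v_t. Then for every τ ≥ 1, v_τ ≤ (1/2)∑_{t=1}^τ λ_t + ( S_τ + ((1/2)∑_{t=1}^τ λ_t)² )^{1/2}. -/
/-!
Let `m ≤ τ` be an index where `v` is maximal on `[0, τ]`. Bounding every `v t` in the recursion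
at `m` by `v m`, and using monotonicity of `S`, gives the quadratic inequality
`v m ^ 2 ≤ S τ + 2 L v m` with `L = (1/2) ∑_{t ≤ τ} λ_t`; completing the square yields
`v τ ≤ v m ≤ L + √(S τ + L ^ 2)`.
-/

open Finset

theorem le_add_sqrt_of_sq_le_add_mul {x L S : ℝ} (h : x ^ 2 ≤ S + 2 * L * x) :
    x ≤ L + √(S + L ^ 2) := by
  have hsq : (x - L) ^ 2 ≤ S + L ^ 2 := by linarith [sq_nonneg (x - L)]
  have : x - L ≤ √(S + L ^ 2) :=
    calc x - L ≤ |x - L| := le_abs_self _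
      _ = √((x - L) ^ 2) := (Real.sqrt_sq_eq_abs _).symm
      _ ≤ √(S + L ^ 2) := Real.sqrt_le_sqrt hsq
  linarith

theorem sq_le_add_sum_mul_of_forall_le (v : ℕ → ℝ) (hv : ∀ t, 0 ≤ v t)
    (lam : ℕ → ℝ) (hlam : ∀ t, 1 ≤ t → 0 ≤ lam t)
    (S : ℕ → ℝ) (hS : Monotone S) (hS0 : v 0 ^ 2 ≤ S 0)
    (hrec : ∀ τ, 1 ≤ τ → v τ ^ 2 ≤ S τ + ∑ t ∈ Icc 1 τ, lam t * v t)
    {m τ : ℕ} (hmτ : m ≤ τ) (hmax : ∀ t ≤ τ, v t ≤ v m) :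
    v m ^ 2 ≤ S τ + (∑ t ∈ Icc 1 τ, lam t) * v m := by
  have hsum : 0 ≤ (∑ t ∈ Icc 1 τ, lam t) * v m :=
    mul_nonneg (sum_nonneg fun t ht => hlam t (mem_Icc.mp ht).1) (hv m)
  rcases Nat.eq_zero_or_pos m with rfl | hm
  · linarith [hS (Nat.zero_le τ)]
  calc v m ^ 2 ≤ S m + ∑ t ∈ Icc 1 m, lam t * v t := hrec m hm
    _ ≤ S τ + ∑ t ∈ Icc 1 τ, lam t * v m := by
      gcongr ?_ + ?_
      · exact hS hmτ
      calc ∑ t ∈ Icc 1 m, lam t * v t ≤ ∑ t ∈ Icc 1 m, lam t * v m :=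
            sum_le_sum fun t ht => mul_le_mul_of_nonneg_left
              (hmax t ((mem_Icc.mp ht).2.trans hmτ)) (hlam t (mem_Icc.mp ht).1)
        _ ≤ ∑ t ∈ Icc 1 τ, lam t * v m :=
            sum_le_sum_of_subset_of_nonneg (Icc_subset_Icc_right hmτ)
              fun t ht _ => mul_nonneg (hlam t (mem_Icc.mp ht).1) (hv m)
    _ = S τ + (∑ t ∈ Icc 1 τ, lam t) * v m := by rw [sum_mul]

theorem stmt17 (v : ℕ → ℝ) (hv : ∀ τ, 0 ≤ v τ)
    (lam : ℕ → ℝ) (hlam : ∀ t, 1 ≤ t → 0 ≤ lam t)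
    (S : ℕ → ℝ) (hS : Monotone S) (hS0 : v 0 ^ 2 ≤ S 0)
    (hrec : ∀ τ, 1 ≤ τ → v τ ^ 2 ≤ S τ + ∑ t ∈ Finset.Icc 1 τ, lam t * v t) :
    ∀ τ, 1 ≤ τ →
      v τ ≤ (1 / 2) * ∑ t ∈ Finset.Icc 1 τ, lam t +
        Real.sqrt (S τ + ((1 / 2) * ∑ t ∈ Finset.Icc 1 τ, lam t) ^ 2) := by
  intro τ _
  obtain ⟨m, hmτ, hmax⟩ := exists_max_image (range (τ + 1)) v nonempty_range_add_one
  have hmax' : ∀ t ≤ τ, v t ≤ v m := fun t ht => hmax t (mem_range_succ_iff.mpr ht)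
  have hm := sq_le_add_sum_mul_of_forall_le v hv lam hlam S hS hS0 hrec (mem_range_succ_iff.mp hmτ) hmax'
  calc v τ ≤ v m := hmax' τ le_rfl
    _ ≤ _ := le_add_sqrt_of_sq_le_add_mul (by linarith)
end
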